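/- arXiv:1803.06858 — 8 statements merged into one kernel-verified Lean document; each statement's English description precedes it below -/
import Mathlib

section
/- Let k ≥ 1 and let p > k be a prime. Let G be a finite simple graph that is connected, k-improved, and has no separating clique. If γ is an automorphism of G of order p, then fix(γ), the set of vertices fixed by γ, is a clique in G. -/
open SimpleGraph

/-- Two walks between the same endpoints are *internally disjoint* if they share
no vertices other than the two endpoints. -/
def InternallyDisjoint {V : Type*} {G : SimpleGraph V} {u v : V}
    (P Q : G.Walk u v) : Prop :=
  ∀ w, w ∈ P.support → w ∈ Q.support → w = u ∨ w = v

/-- A graph is *k-improved* if every two distinct nonadjacent vertices are joined by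
at most `k` pairwise internally vertex-disjoint paths. -/
def IsKImproved {V : Type*} (G : SimpleGraph V) (k : ℕ) : Prop :=
  ∀ u v : V, u ≠ v → ¬ G.Adj u v →
    ∀ (n : ℕ) (f : Fin n → G.Path u v), Function.Injective f →
      (∀ i j : Fin n, i ≠ j → InternallyDisjoint (f i).val (f j).val) → n ≤ k

/-- `G` has no separating clique: removing any clique leaves a (pre)connected graph. -/
def NoSeparatingClique {V : Type*} (G : SimpleGraph V) : Prop :=
  ∀ S : Set V, G.IsClique S → (G.induce (Sᶜ : Set V)).Preconnected

/-- The permutation `γ` is an automorphism of the graph `G`. -/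
def IsGraphAutomorphism {V : Type*} (G : SimpleGraph V) (γ : Equiv.Perm V) : Prop :=
  ∀ u v : V, G.Adj (γ u) (γ v) ↔ G.Adj u v

section aux
variable {V : Type*} {G : SimpleGraph V} {γ : Equiv.Perm V}

lemma adj_pow_iff (hγ : IsGraphAutomorphism G γ) (m : ℕ) :
    ∀ a b : V, G.Adj ((γ ^ m) a) ((γ ^ m) b) ↔ G.Adj a b := by
  induction m with
  | zero => simp
  | succ n ih =>
    intro a b
    rw [pow_succ]
    simp only [Equiv.Perm.mul_apply]
    rw [ih (γ a) (γ b), hγ]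

/-- the `m`-th power of a graph automorphism, as a graph homomorphism -/
def powHom (hγ : IsGraphAutomorphism G γ) (m : ℕ) : G →g G :=
  ⟨⇑(γ ^ m), fun {a b} h => (adj_pow_iff hγ m a b).mpr h⟩

lemma fixed_pow {u : V} (hu : γ u = u) (m : ℕ) : (γ ^ m) u = u :=
  Equiv.Perm.pow_apply_eq_self_of_apply_eq_self hu m

lemma fix_of_pow_fix {p : ℕ} (hp : p.Prime) (hord : orderOf γ = p) {m : ℕ}
    (hm : ¬ p ∣ m) {x : V} (hx : (γ ^ m) x = x) : γ x = x := by
  have hco : Nat.Coprime p m := (Nat.Prime.coprime_iff_not_dvd hp).mpr hm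
  have hbez : (1 : ℤ) = p * Nat.gcdA p m + m * Nat.gcdB p m := by
    have := Nat.gcd_eq_gcd_ab p m
    rwa [hco] at this
  have h1 : γ = (γ ^ (p : ℤ)) ^ Nat.gcdA p m * (γ ^ (m : ℤ)) ^ Nat.gcdB p m := by
    rw [← zpow_mul, ← zpow_mul, ← zpow_add, ← hbez, zpow_one]
  have hgp : (γ ^ (p : ℤ)) = 1 := by
    rw [zpow_natCast, ← hord, pow_orderOf_eq_one]
  rw [h1, hgp, one_zpow, one_mul]
  exact Equiv.Perm.zpow_apply_eq_self_of_apply_eq_self (by rw [← zpow_natCast] at hx; exact hx) _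

lemma nonfix_apply_pow {m : ℕ} {a : V} (hfa : γ a ≠ a) : γ ((γ ^ m) a) ≠ (γ ^ m) a := by
  intro hcon
  apply hfa
  have : (γ ^ m) (γ a) = (γ ^ m) a := by
    have comm : γ ^ m * γ = γ * γ ^ m := Commute.pow_self γ m
    calc (γ ^ m) (γ a) = (γ ^ m * γ) a := rfl
    _ = (γ * γ ^ m) a := by rw [comm]
    _ = γ ((γ ^ m) a) := rfl
    _ = (γ ^ m) a := hcon
  exact (γ ^ m).injective this

/-- internal vertices (relative to the pair `u v`) are non-fixed -/
def Nice (γ : Equiv.Perm V) (u v : V) {a b : V} (W : G.Walk a b) : Prop :=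
  ∀ z ∈ W.support, z = u ∨ z = v ∨ γ z ≠ z

lemma splice (hγ : IsGraphAutomorphism G γ) {u v y y' : V}
    (hu : γ u = u) (hv : γ v = v)
    (A : G.Walk u y) (B : G.Walk y' v) (m : ℕ) (h : (γ ^ m) y' = y)
    (hA : Nice γ u v A) (hB : Nice γ u v B) :
    ∃ Q : G.Walk u v, Q.length = A.length + B.length ∧ Nice γ u v Q := by
  refine ⟨A.append ((B.map (powHom hγ m)).copy h (fixed_pow hv m)), ?_, ?_⟩
  · erw [Walk.length_append, Walk.length_copy, Walk.length_map]
  · intro z hz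
    rw [Walk.mem_support_append_iff] at hz
    rcases hz with hz | hz
    · exact hA z hz
    · erw [Walk.support_copy, Walk.support_map] at hz
      obtain ⟨a, ha, rfl⟩ := List.mem_map.mp hz
      rcases hB a ha with rfl | rfl | hfa
      · left; exact fixed_pow hu m
      · right; left; exact fixed_pow hv m
      · right; right; exact nonfix_apply_pow hfa

lemma exists_internal {u v : V} (hne : u ≠ v) (hnadj : ¬ G.Adj u v)
    (P : G.Walk u v) (hP : P.IsPath) : ∃ c ∈ P.support, c ≠ u ∧ c ≠ v := by
  cases P with
  | nil => exact absurd rfl hne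
  | @cons _ c _ h q =>
    rw [Walk.cons_isPath_iff] at hP
    refine ⟨c, by simp, ?_, ?_⟩
    · intro rfl'
      exact hP.2 (rfl' ▸ q.start_mem_support)
    · intro rfl'
      exact hnadj (rfl' ▸ h)

lemma no_nice_walk (hγ : IsGraphAutomorphism G γ) {k p : ℕ} (hp : p.Prime) (hpk : k < p)
    (hord : orderOf γ = p) (himp : IsKImproved G k) {u v : V} (hu : γ u = u) (hv : γ v = v)
    (hne : u ≠ v) (hnadj : ¬ G.Adj u v) (W₀ : G.Walk u v) (hW₀ : Nice γ u v W₀) : False := by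
  classical
  have hp1 : γ ^ p = 1 := by rw [← hord]; exact pow_orderOf_eq_one γ
  have hex : ∃ n, ∃ W : G.Walk u v, Nice γ u v W ∧ W.length = n := ⟨W₀.length, W₀, hW₀, rfl⟩
  obtain ⟨W, hWnice, hWlen⟩ := Nat.find_spec hex
  have hmin : ∀ (Q : G.Walk u v), Nice γ u v Q → Nat.find hex ≤ Q.length :=
    fun Q hQ => Nat.find_min' hex ⟨Q, hQ, rfl⟩
  obtain ⟨P, hPpath, hPnice, hPlen⟩ :
      ∃ P : G.Walk u v, P.IsPath ∧ Nice γ u v P ∧ P.length = Nat.find hex := by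
    refine ⟨W.bypass, W.bypass_isPath, fun z hz => hWnice z (W.support_bypass_subset hz), ?_⟩
    exact le_antisymm (hWlen ▸ W.length_bypass_le) (hmin _ (fun z hz => hWnice z (W.support_bypass_subset hz)))
  -- internal vertices of P lie in pairwise distinct orbits
  have hdist : ∀ x y : V, x ∈ P.support → y ∈ P.support → x ≠ u → x ≠ v → y ≠ u → y ≠ v →
      ∀ m : ℕ, (γ ^ m) y = x → x = y := by
    intro x y hx hy hxu hxv hyu hyv m hm
    by_contra hxy
    have hts := P.take_spec hx
    have hy' : y ∈ (P.takeUntil x hx).support ∨ y ∈ (P.dropUntil x hx).support := by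
      rw [← hts] at hy
      rcases (Walk.mem_support_append_iff _ _).mp hy with h | h
      exacts [Or.inl h, Or.inr h]
    have hlenP : (P.takeUntil x hx).length + (P.dropUntil x hx).length = P.length := by
      rw [← Walk.length_append, hts]
    rcases hy' with hyT | hyD
    · -- y occurs before x
      have hm' : (γ ^ (m * (p - 1))) x = y := by
        have : (γ ^ (m * (p - 1))) x = (γ ^ (m * (p - 1) + m)) y := by
          rw [← hm, pow_add]; rfl
        rw [this]
        have hmp : m * (p - 1) + m = m * p := by
          cases p with
          | zero => exact absurd rfl hp.ne_zero
          | succ q => simp [Nat.mul_succ]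
        rw [hmp, pow_mul', hp1, one_pow]; rfl
      have hTts := (P.takeUntil x hx).take_spec hyT
      obtain ⟨Q, hQlen, hQnice⟩ := splice hγ hu hv ((P.takeUntil x hx).takeUntil y hyT)
        (P.dropUntil x hx) _ hm'
        (fun z hz => hPnice z (P.support_takeUntil_subset hx
          ((P.takeUntil x hx).support_takeUntil_subset hyT hz)))
        (fun z hz => hPnice z (P.support_dropUntil_subset hx hz))
      have hlt : Q.length < P.length := by
        have h1 : ((P.takeUntil x hx).takeUntil y hyT).length
            + ((P.takeUntil x hx).dropUntil y hyT).length = (P.takeUntil x hx).length := by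
          rw [← Walk.length_append, hTts]
        have h2 : ((P.takeUntil x hx).dropUntil y hyT).length ≠ 0 := by
          intro h0
          exact hxy (Walk.eq_of_length_eq_zero h0).symm
        omega
      rw [hPlen] at hlt
      exact absurd (hmin Q hQnice) (by omega)
    · -- y occurs after x
      have hDts := (P.dropUntil x hx).take_spec hyD
      obtain ⟨Q, hQlen, hQnice⟩ := splice hγ hu hv (P.takeUntil x hx)
        ((P.dropUntil x hx).dropUntil y hyD) m hm
        (fun z hz => hPnice z (P.support_takeUntil_subset hx hz))
        (fun z hz => hPnice z (P.support_dropUntil_subset hx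
          ((P.dropUntil x hx).support_dropUntil_subset hyD hz)))
      have hlt : Q.length < P.length := by
        have h1 : ((P.dropUntil x hx).takeUntil y hyD).length
            + ((P.dropUntil x hx).dropUntil y hyD).length = (P.dropUntil x hx).length := by
          rw [← Walk.length_append, hDts]
        have h2 : ((P.dropUntil x hx).takeUntil y hyD).length ≠ 0 := by
          intro h0
          exact hxy (Walk.eq_of_length_eq_zero h0)
        omega
      rw [hPlen] at hlt
      exact absurd (hmin Q hQnice) (by omega)
  -- the p translates of P
  have hpath_i : ∀ i : ℕ, ((P.map (powHom hγ i)).copy (fixed_pow hu i) (fixed_pow hv i)).IsPath := by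
    intro i
    erw [Walk.isPath_copy]
    exact Walk.map_isPath_of_injective (f := powHom hγ i) (γ ^ i).injective hPpath
  set f : Fin p → G.Path u v := fun i =>
    ⟨(P.map (powHom hγ (i : ℕ))).copy (fixed_pow hu _) (fixed_pow hv _), hpath_i _⟩ with hf
  have hsupp : ∀ (i : Fin p) (w : V), w ∈ (f i).val.support ↔
      ∃ a ∈ P.support, (γ ^ (i : ℕ)) a = w := by
    intro i w
    simp only [hf]
    erw [Walk.support_copy, Walk.support_map, List.mem_map]
    exact ⟨fun ⟨a, h1, h2⟩ => ⟨a, h1, h2⟩, fun ⟨a, h1, h2⟩ => ⟨a, h1, h2⟩⟩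
  have hdisj : ∀ i j : Fin p, i ≠ j → InternallyDisjoint (f i).val (f j).val := by
    have core : ∀ i j : Fin p, (i : ℕ) < (j : ℕ) → InternallyDisjoint (f i).val (f j).val := by
      intro i j hij w hwi hwj
      obtain ⟨a, ha, rfl⟩ := (hsupp i w).mp hwi
      obtain ⟨b, hb, hba⟩ := (hsupp j _).mp hwj
      rcases hPnice a ha with rfl | rfl | hfa
      · left; exact fixed_pow hu _
      · right; exact fixed_pow hv _
      rcases hPnice b hb with rfl | rfl | hfb
      · left; rw [← hba]; exact fixed_pow hu _
      · right; rw [← hba]; exact fixed_pow hv _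
      exfalso
      have hab : (γ ^ ((j : ℕ) - (i : ℕ))) b = a := by
        apply (γ ^ (i : ℕ)).injective
        have : (γ ^ (i : ℕ)) ((γ ^ ((j : ℕ) - (i : ℕ))) b) = (γ ^ (j : ℕ)) b := by
          have : γ ^ (i : ℕ) * γ ^ ((j : ℕ) - (i : ℕ)) = γ ^ (j : ℕ) := by
            rw [← pow_add]
            congr 1
            omega
          rw [← this]; rfl
        rw [this, hba]
      have haau : a ≠ u := fun h => hfa (h ▸ hu)
      have haav : a ≠ v := fun h => hfa (h ▸ hv)
      have hbbu : b ≠ u := fun h => hfb (h ▸ hu)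
      have hbbv : b ≠ v := fun h => hfb (h ▸ hv)
      have hab' := hdist a b ha hb haau haav hbbu hbbv _ hab
      subst hab'
      have hnd : ¬ p ∣ ((j : ℕ) - (i : ℕ)) := by
        intro hdvd
        have hjp : (j : ℕ) < p := j.isLt
        have h1 : 0 < (j : ℕ) - (i : ℕ) := by omega
        have := Nat.le_of_dvd h1 hdvd
        omega
      exact hfa (fix_of_pow_fix hp hord hnd hab)
    intro i j hij
    rcases lt_or_gt_of_ne (fun h : (i : ℕ) = (j : ℕ) => hij (Fin.ext h)) with h | h
    · exact core i j h
    · intro w hwi hwj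
      exact core j i h w hwj hwi
  have hinj : Function.Injective f := by
    intro i j hij
    by_contra hne'
    obtain ⟨c, hc, hcu, hcv⟩ := exists_internal hne hnadj P hPpath
    have hw : (γ ^ (i : ℕ)) c ∈ (f i).val.support := (hsupp i _).mpr ⟨c, hc, rfl⟩
    have hw' : (γ ^ (i : ℕ)) c ∈ (f j).val.support := by rw [← hij]; exact hw
    rcases hdisj i j hne' _ hw hw' with h | h
    · exact hcu ((γ ^ (i : ℕ)).injective (h.trans (fixed_pow hu _).symm))
    · exact hcv ((γ ^ (i : ℕ)).injective (h.trans (fixed_pow hv _).symm))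
  have := himp u v hne hnadj p f hinj hdisj
  omega

end aux

theorem stmt0 {V : Type*} [Fintype V] (G : SimpleGraph V) (k p : ℕ)
    (hk : 1 ≤ k) (hp : p.Prime) (hpk : k < p)
    (hconn : G.Connected) (himp : IsKImproved G k) (hsep : NoSeparatingClique G)
    (γ : Equiv.Perm V) (hγ : IsGraphAutomorphism G γ) (hord : orderOf γ = p) :
    G.IsClique {v : V | γ v = v} := by
  classical
  intro u hu v hv hne
  simp only [Set.mem_setOf_eq] at hu hv
  by_contra hnadj
  by_cases hex : ∃ a b : V, γ a = a ∧ γ b = b ∧ a ≠ b ∧ ¬ G.Adj a b ∧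
      ∃ W : G.Walk a b, Nice γ a b W
  · obtain ⟨a, b, ha, hb, hab, hnadj', W, hW⟩ := hex
    exact no_nice_walk hγ hp hpk hord himp ha hb hab hnadj' W hW
  · have hnice : ∀ a b : V, γ a = a → γ b = b → a ≠ b → ¬ G.Adj a b →
        ∀ W : G.Walk a b, ¬ Nice γ a b W := by
      intro a b ha hb hab hnadj' W hW
      exact hex ⟨a, b, ha, hb, hab, hnadj', W, hW⟩
    have hγne : γ ≠ 1 := by
      intro h
      rw [h, orderOf_one] at hord
      exact hp.one_lt.ne' hord.symm
    obtain ⟨w₀, hw₀⟩ : ∃ x, γ x ≠ x := by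
      by_contra hno
      push_neg at hno
      exact hγne (Equiv.ext fun x => hno x)
    set C : Set V := {x | ∃ W : G.Walk w₀ x, ∀ z ∈ W.support, γ z ≠ z} with hC
    set S : Set V := {y | γ y = y ∧ ∃ x ∈ C, G.Adj x y} with hS
    have hCF : ∀ x ∈ C, γ x ≠ x := by
      rintro x ⟨W, hW⟩
      exact hW x W.end_mem_support
    have hSclique : G.IsClique S := by
      rintro y₁ ⟨hfy₁, x₁, hx₁C, hadj₁⟩ y₂ ⟨hfy₂, x₂, hx₂C, hadj₂⟩ hne'
      by_contra hnadj'
      obtain ⟨W₁, hW₁⟩ := hx₁C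
      obtain ⟨W₂, hW₂⟩ := hx₂C
      refine hnice y₁ y₂ hfy₁ hfy₂ hne' hnadj'
        (Walk.cons hadj₁.symm ((W₁.reverse.append W₂).concat hadj₂)) ?_
      intro z hz
      rw [Walk.support_cons] at hz
      rcases List.mem_cons.mp hz with rfl | hz
      · left; rfl
      rw [Walk.support_concat] at hz
      rcases List.mem_append.mp hz with hz | hz'
      on_goal 2 => obtain rfl := List.mem_singleton.mp hz'
      · rcases (Walk.mem_support_append_iff _ _).mp hz with hz' | hz'
        · right; right
          rw [Walk.support_reverse] at hz'
          exact hW₁ z (List.mem_reverse.mp hz')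
        · right; right; exact hW₂ z hz'
      · right; left; rfl
    have hpre := hsep S hSclique
    have hstep : ∀ a ∈ C, ∀ b : V, b ∉ S → G.Adj a b → b ∈ C := by
      intro a haC b hbS hadj
      by_cases hfb : γ b = b
      · exact absurd ⟨hfb, a, haC, hadj⟩ hbS
      · obtain ⟨W, hW⟩ := haC
        refine ⟨W.concat hadj, ?_⟩
        intro z hz
        rw [Walk.support_concat] at hz
        rcases List.mem_append.mp hz with h | h'
        · exact hW z h
        · obtain rfl := List.mem_singleton.mp h'
          exact hfb
    have hw₀S : w₀ ∉ S := fun h => hw₀ h.1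
    have hw₀C : w₀ ∈ C := by
      refine ⟨Walk.nil, ?_⟩
      intro z hz
      rw [Walk.support_nil, List.mem_singleton] at hz
      exact hz ▸ hw₀
    have hreach : ∀ z : V, z ∉ S → z ∈ C := by
      intro z hzS
      have claim : ∀ (a b : ↑(Sᶜ : Set V)) (W : (G.induce (Sᶜ : Set V)).Walk a b),
          (a : V) ∈ C → (b : V) ∈ C := by
        intro a b W
        induction W with
        | nil => exact id
        | @cons a' c' b' h q ih =>
          intro haC
          exact ih (hstep _ haC _ c'.2 h)
      obtain ⟨W⟩ := hpre ⟨w₀, hw₀S⟩ ⟨z, hzS⟩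
      exact claim _ _ W hw₀C
    by_cases huS : u ∈ S
    · by_cases hvS : v ∈ S
      · exact hnadj (hSclique huS hvS hne)
      · exact hCF v (hreach v hvS) hv
    · exact hCF u (hreach u huS) hu
end

section
/- Let k ≥ 1 and let p > k be a prime. Let G be a finite simple graph that is k-improved, let γ be an automorphism of G of order p, and let C be a connected component of the subgraph induced on V(G) \ fix(γ). Then the neighborhood N(C) of C, i.e., the set of vertices outside C adjacent to some vertex of C, is a clique in G. -/
open SimpleGraph

/-- `C` is (the vertex set of) a connected component of the subgraph of `G`
induced on the vertex set `A`. -/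
def IsComponentOf {V : Type*} (G : SimpleGraph V) (A C : Set V) : Prop :=
  C.Nonempty ∧ C ⊆ A ∧ (G.induce C).Connected ∧
    ∀ u ∈ C, ∀ v ∈ A, G.Adj u v → v ∈ C

/-- The neighborhood of a set `C` of vertices: all vertices outside `C`
adjacent to some vertex of `C`. -/
def setNeighborhood {V : Type*} (G : SimpleGraph V) (C : Set V) : Set V :=
  {v : V | v ∉ C ∧ ∃ u ∈ C, G.Adj v u}

lemma isAuto_pow {V : Type*} {G : SimpleGraph V} {γ : Equiv.Perm V}
    (hγ : IsGraphAutomorphism G γ) (n : ℕ) : IsGraphAutomorphism G (γ ^ n) := by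
  induction n with
  | zero => intro u v; simp
  | succ n ih =>
      intro u v
      rw [pow_succ]
      exact (ih (γ u) (γ v)).trans (hγ u v)

def autHom {V : Type*} {G : SimpleGraph V} (γ : Equiv.Perm V)
    (hγ : IsGraphAutomorphism G γ) : G →g G :=
  ⟨fun v => γ v, fun h => (hγ _ _).mpr h⟩

@[simp] lemma autHom_apply {V : Type*} {G : SimpleGraph V} (γ : Equiv.Perm V)
    (hγ : IsGraphAutomorphism G γ) (v : V) : autHom γ hγ v = γ v := rfl

lemma free_lemma {V : Type*} {γ : Equiv.Perm V} {p : ℕ} (hp : p.Prime)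
    (hord : orderOf γ = p) {v : V} (hv : γ v ≠ v) {d : ℕ} (h0 : 0 < d) (hdp : d < p) :
    (γ ^ d) v ≠ v := by
  intro h
  apply hv
  have hcop : Nat.gcd d p = 1 :=
    Nat.Coprime.symm (hp.coprime_iff_not_dvd.mpr (Nat.not_dvd_of_pos_of_lt h0 hdp))
  have hbez := Nat.gcd_eq_gcd_ab d p
  have hp1 : (γ ^ (p : ℤ)) = 1 := by
    rw [zpow_natCast, ← hord, pow_orderOf_eq_one]
  have h1 : γ = (γ ^ (d : ℤ)) ^ Nat.gcdA d p * (γ ^ (p : ℤ)) ^ Nat.gcdB d p := by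
    rw [← zpow_mul, ← zpow_mul, ← zpow_add]
    calc γ = γ ^ (1 : ℤ) := (zpow_one γ).symm
      _ = γ ^ ((Nat.gcd d p : ℤ)) := by rw [hcop]; norm_num
      _ = _ := by rw [hbez]
  conv_lhs => rw [h1]
  rw [hp1, one_zpow, mul_one]
  exact Equiv.Perm.zpow_apply_eq_self_of_apply_eq_self (by rw [zpow_natCast]; exact h) _

def WalkInv {V : Type*} {G : SimpleGraph V} (γ : Equiv.Perm V) (p : ℕ) {x c : V}
    (W : G.Walk x c) : Prop :=
  ∀ d, 0 < d → d < p → ∀ w ∈ W.support, w ≠ x → (γ ^ d) w ∉ W.support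

lemma step_lemma {V : Type*} [DecidableEq V] {G : SimpleGraph V} {γ : Equiv.Perm V} {p : ℕ}
    (hγ : IsGraphAutomorphism G γ) (hγp : γ ^ p = 1) {x : V} (hxfix : γ x = x)
    {c c' : V} (hfree : ∀ d, 0 < d → d < p → (γ ^ d) c' ≠ c')
    (hadj : G.Adj c c') :
    (∃ W : G.Walk x c, WalkInv γ p W) → ∃ W : G.Walk x c', WalkInv γ p W := by
  rintro ⟨W, hW⟩
  have hxpow : ∀ n, (γ ^ n) x = x := fun n =>
    Equiv.Perm.pow_apply_eq_self_of_apply_eq_self hxfix n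
  by_cases hcase : ∃ d, d < p ∧ (γ ^ d) c' ∈ W.support
  · obtain ⟨d, hdp, hmem⟩ := hcase
    have hend : (γ ^ (p - d)) ((γ ^ d) c') = c' := by
      rw [← Equiv.Perm.mul_apply, ← pow_add, Nat.sub_add_cancel (le_of_lt hdp), hγp,
        Equiv.Perm.one_apply]
    refine ⟨((W.takeUntil _ hmem).map (autHom (γ ^ (p - d)) (isAuto_pow hγ (p - d)))).copy
      (by rw [autHom_apply]; exact hxpow (p - d)) (by rw [autHom_apply]; exact hend), ?_⟩
    intro e he0 hep w hw hwx hw2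
    rw [Walk.support_copy, Walk.support_map] at hw hw2
    obtain ⟨u, hu, rfl⟩ := List.mem_map.mp hw
    obtain ⟨u', hu', heq⟩ := List.mem_map.mp hw2
    have hcomm : (γ ^ e) ((γ ^ (p - d)) u) = (γ ^ (p - d)) ((γ ^ e) u) := by
      rw [← Equiv.Perm.mul_apply, ← Equiv.Perm.mul_apply, ← pow_add, ← pow_add, Nat.add_comm]
    have heq' : (γ ^ (p - d)) u' = (γ ^ (p - d)) ((γ ^ e) u) :=
      (show (γ ^ (p - d)) u' = (γ ^ e) ((γ ^ (p - d)) u) from heq).trans hcomm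
    have hu'eq : u' = (γ ^ e) u := (Equiv.injective (γ ^ (p - d))) heq'
    have hux : u ≠ x := fun h => hwx (by show (γ ^ (p - d)) u = x; rw [h]; exact hxpow _)
    exact hW e he0 hep u (Walk.support_takeUntil_subset _ _ hu) hux
      (hu'eq ▸ Walk.support_takeUntil_subset _ _ hu')
  · push_neg at hcase
    refine ⟨W.concat hadj, ?_⟩
    intro e he0 hep w hw hwx hw2
    rw [Walk.support_concat, List.mem_append, List.mem_singleton] at hw hw2
    rcases hw with hw | rfl
    · rcases hw2 with hw2 | heq
      · exact hW e he0 hep w hw hwx hw2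
      · apply hcase (p - e) (by omega)
        have : (γ ^ (p - e)) ((γ ^ e) w) = w := by
          rw [← Equiv.Perm.mul_apply, ← pow_add, Nat.sub_add_cancel (le_of_lt hep), hγp,
            Equiv.Perm.one_apply]
        rw [← heq, this]
        exact hw
    · rcases hw2 with hw2 | heq
      · exact hcase e hep hw2
      · exact hfree e he0 hep heq

lemma walk_claim {V : Type*} [DecidableEq V] {G : SimpleGraph V} {γ : Equiv.Perm V} {p : ℕ}
    {C : Set V} (hγ : IsGraphAutomorphism G γ) (hγp : γ ^ p = 1) {x : V} (hxfix : γ x = x)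
    (hfree : ∀ v ∈ C, ∀ d, 0 < d → d < p → (γ ^ d) v ≠ v) :
    ∀ {u v : ↑C} (_ : (G.induce C).Walk u v),
      (∃ W : G.Walk x ↑u, WalkInv γ p W) → ∃ W : G.Walk x ↑v, WalkInv γ p W := by
  intro u v Q
  induction Q with
  | nil => exact id
  | @cons u u' v h q ih =>
      intro hu
      exact ih (step_lemma hγ hγp hxfix (hfree _ u'.2) h hu)

lemma nontrivial_vertex {V : Type*} {G : SimpleGraph V} {x y : V} (hxy : x ≠ y)
    (hnadj : ¬ G.Adj x y) (W : G.Walk x y) : ∃ w ∈ W.support, w ≠ x ∧ w ≠ y := by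
  cases W with
  | nil => exact absurd rfl hxy
  | @cons _ w1 _ h q =>
      refine ⟨w1, by simp [Walk.start_mem_support], ?_, ?_⟩
      · intro h1; exact G.irrefl (h1 ▸ h)
      · intro h2; exact hnadj (h2 ▸ h)

theorem stmt2 {V : Type*} [Fintype V] (G : SimpleGraph V) (k p : ℕ)
    (hk : 1 ≤ k) (hp : p.Prime) (hpk : k < p)
    (himp : IsKImproved G k)
    (γ : Equiv.Perm V) (hγ : IsGraphAutomorphism G γ) (hord : orderOf γ = p)
    (C : Set V) (hC : IsComponentOf G ({v : V | γ v = v}ᶜ) C) :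
    G.IsClique (setNeighborhood G C) := by
  classical
  intro x hx y hy hxy
  by_contra hnadj
  obtain ⟨hxC, a, haC, hxa⟩ := hx
  obtain ⟨hyC, b, hbC, hyb⟩ := hy
  obtain ⟨hCne, hCA, hCconn, hCcl⟩ := hC
  have hγp : γ ^ p = 1 := by rw [← hord]; exact pow_orderOf_eq_one γ
  have hfixnb : ∀ z u, z ∉ C → u ∈ C → G.Adj z u → γ z = z := by
    intro z u hz hu hadj
    by_contra h
    exact hz (hCcl u hu z h hadj.symm)
  have hxfix : γ x = x := hfixnb x a hxC haC hxa
  have hyfix : γ y = y := hfixnb y b hyC hbC hyb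
  have hxpow : ∀ n, (γ ^ n) x = x := fun n =>
    Equiv.Perm.pow_apply_eq_self_of_apply_eq_self hxfix n
  have hypow : ∀ n, (γ ^ n) y = y := fun n =>
    Equiv.Perm.pow_apply_eq_self_of_apply_eq_self hyfix n
  have hfree : ∀ v ∈ C, ∀ d, 0 < d → d < p → (γ ^ d) v ≠ v := by
    intro v hv d h0 hdp
    exact free_lemma hp hord (hCA hv) h0 hdp
  have hbase : ∃ W : G.Walk x a, WalkInv γ p W := by
    refine ⟨SimpleGraph.Walk.cons hxa SimpleGraph.Walk.nil, ?_⟩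
    intro d h0 hdp w hw hwx hw2
    simp only [Walk.support_cons, Walk.support_nil, List.mem_cons,
      List.mem_singleton, List.not_mem_nil, or_false] at hw hw2
    rcases hw with rfl | rfl
    · exact hwx rfl
    · rcases hw2 with h2 | h2
      · have h3 : (γ ^ (p - d)) ((γ ^ d) w) = w := by
          rw [← Equiv.Perm.mul_apply, ← pow_add, Nat.sub_add_cancel (le_of_lt hdp), hγp,
            Equiv.Perm.one_apply]
        rw [h2, hxpow] at h3
        exact hxC (h3 ▸ haC)
      · exact hfree w haC d h0 hdp h2
  obtain ⟨W, hW⟩ : ∃ W : G.Walk x b, WalkInv γ p W := by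
    obtain ⟨Q⟩ := hCconn.preconnected ⟨a, haC⟩ ⟨b, hbC⟩
    exact walk_claim hγ hγp hxfix hfree Q hbase
  have hadjy : ∀ i : ℕ, G.Adj ((γ ^ i) b) y := by
    intro i
    have h2 := (isAuto_pow hγ i y b).mpr hyb
    rw [hypow i] at h2
    exact h2.symm
  set F : Fin p → G.Path x y := fun i =>
    ((((W.map (autHom (γ ^ (i : ℕ)) (isAuto_pow hγ (i : ℕ)))).copy (by rw [autHom_apply]; exact hxpow (i : ℕ)) (by rw [autHom_apply])).concat
      (hadjy (i : ℕ))).toPath) with hF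
  have hsup : ∀ (i : Fin p) (w : V), w ∈ (F i).1.support →
      w = y ∨ ∃ u ∈ W.support, w = (γ ^ (i : ℕ)) u := by
    intro i w hw
    have h1 := Walk.support_toPath_subset _ hw
    rw [Walk.support_concat, List.mem_append, List.mem_singleton,
      Walk.support_copy, Walk.support_map] at h1
    rcases h1 with h1 | rfl
    · obtain ⟨u, hu, rfl⟩ := List.mem_map.mp h1
      exact Or.inr ⟨u, hu, rfl⟩
    · exact Or.inl rfl
  have hdis2 : ∀ i j : Fin p, (i : ℕ) < (j : ℕ) → ∀ w, w ∈ (F i).1.support →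
      w ∈ (F j).1.support → w = x ∨ w = y := by
    intro i j hij w hwi hwj
    rcases hsup i w hwi with rfl | ⟨u, hu, rfl⟩
    · exact Or.inr rfl
    rcases hsup j _ hwj with h | ⟨v, hv, heq⟩
    · exact Or.inr h
    by_cases hux : u = x
    · subst hux; exact Or.inl (hxpow _)
    by_cases hvx : v = x
    · rw [hvx, hxpow] at heq
      exact Or.inl heq
    exfalso
    have h3 : (γ ^ (j : ℕ)) v = (γ ^ (i : ℕ)) ((γ ^ ((j : ℕ) - (i : ℕ))) v) := by
      rw [← Equiv.Perm.mul_apply, ← pow_add, Nat.add_sub_cancel' (le_of_lt hij)]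
    rw [h3] at heq
    have h4 := (Equiv.injective _) heq
    refine hW ((j : ℕ) - (i : ℕ)) (by omega) (lt_of_le_of_lt (Nat.sub_le _ _) j.isLt)
      v hv hvx ?_
    rw [← h4]
    exact hu
  have hdisj : ∀ i j : Fin p, i ≠ j → InternallyDisjoint (F i).1 (F j).1 := by
    intro i j hij w hwi hwj
    rcases lt_or_gt_of_ne (fun h : (i : ℕ) = (j : ℕ) => hij (Fin.ext h)) with h | h
    · exact hdis2 i j h w hwi hwj
    · exact hdis2 j i h w hwj hwi
  have hinj : Function.Injective F := by
    intro i j hij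
    by_contra hne
    have hd := hdisj i j hne
    obtain ⟨w, hw, hwx, hwy⟩ := nontrivial_vertex hxy hnadj (F i).1
    rcases hd w hw (by rw [hij] at hw; exact hw) with h | h
    exacts [hwx h, hwy h]
  have := himp x y hxy hnadj p F hinj hdisj
  omega
end

section
/- Let k ≥ 1 and let p > k be a prime. Let G be a finite simple graph that is connected, k-improved, and has no separating clique. Let γ be an automorphism of G of order p and let C be a connected component of the subgraph induced on V(G) \ fix(γ). Then the neighborhood N(C) of C, i.e., the set of vertices outside C adjacent to some vertex of C, is equal to fix(γ). -/
open SimpleGraph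

section Aux

variable {V : Type*} {G : SimpleGraph V}

lemma getVert_append_len {u v w : V} (p : G.Walk u v) (q : G.Walk v w) :
    (p.append q).getVert p.length = v := by
  induction p with
  | nil => simpa using q.getVert_zero
  | cons h p ih => simpa [Walk.cons_append, Walk.getVert_cons_succ] using ih q

lemma getVert_takeUntil_len [DecidableEq V] {u v z : V} (W : G.Walk u v)
    (hz : z ∈ W.support) : W.getVert (W.takeUntil z hz).length = z := by
  have h := Walk.take_spec W hz
  have h2 := getVert_append_len (W.takeUntil z hz) (W.dropUntil z hz)
  rwa [h] at h2

lemma zpow_isAuto {γ : Equiv.Perm V} (h : IsGraphAutomorphism G γ) (s : ℤ) :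
    IsGraphAutomorphism G (γ ^ s) := by
  have hn : ∀ n : ℕ, IsGraphAutomorphism G (γ ^ n) := by
    intro n
    induction n with
    | zero => intro u v; simp
    | succ n ih =>
      intro u v
      rw [pow_succ]
      simpa [Equiv.Perm.mul_apply] using (ih (γ u) (γ v)).trans (h u v)
  intro u v
  obtain ⟨n, rfl | rfl⟩ := Int.eq_nat_or_neg s
  · simpa [zpow_natCast] using hn n u v
  · rw [zpow_neg, zpow_natCast]
    constructor
    · intro had
      have := (hn n _ _).mpr had
      simpa using this
    · intro had
      apply (hn n ((γ ^ n)⁻¹ u) ((γ ^ n)⁻¹ v)).mp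
      simpa using had

/-- The graph homomorphism given by an automorphism power. -/
def zpowHom (G : SimpleGraph V) (γ : Equiv.Perm V) (h : IsGraphAutomorphism G γ)
    (s : ℤ) : G →g G :=
  ⟨⇑(γ ^ s), fun hadj => (zpow_isAuto h s _ _).2 hadj⟩

@[simp] lemma zpowHom_apply (γ : Equiv.Perm V) (h : IsGraphAutomorphism G γ) (s : ℤ)
    (x : V) : zpowHom G γ h s x = (γ ^ s) x := rfl

lemma fix_zpow (δ : Equiv.Perm V) (x : V) (hx : δ x = x) (s : ℤ) : (δ ^ s) x = x := by
  have hn : ∀ n : ℕ, (δ ^ n) x = x := by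
    intro n
    induction n with
    | zero => simp
    | succ n ih => rw [pow_succ, Equiv.Perm.mul_apply, hx, ih]
  obtain ⟨n, rfl | rfl⟩ := Int.eq_nat_or_neg s
  · simpa [zpow_natCast] using hn n
  · rw [zpow_neg, zpow_natCast]
    have := hn n
    conv_lhs => rw [← this]
    simp

lemma no_cross {C S : Set V} (hS : ∀ v, v ∉ C → (∃ u ∈ C, G.Adj v u) → v ∈ S) :
    ∀ {u c : V} (w : G.Walk u c), c ∈ C → (∀ z ∈ w.support, z ∉ S) → u ∉ C → False := by
  intro u c w
  induction w with
  | nil => intro hc _ h; exact h hc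
  | @cons u v c hadj w ih =>
    intro hc hsupp huC
    by_cases hv : v ∈ C
    · exact hsupp u (Walk.start_mem_support _) (hS u huC ⟨v, hv, hadj⟩)
    · exact ih hc (fun z hz => hsupp z (by rw [Walk.support_cons]; exact List.mem_cons_of_mem _ hz)) hv

lemma buildPath_isPath {a b x y : V} (W : G.Walk x y) (hW : W.IsPath)
    (ha : G.Adj a x) (hb : G.Adj y b) (haW : a ∉ W.support) (hbW : b ∉ W.support)
    (hab : a ≠ b) : (Walk.cons ha (W.concat hb)).IsPath := by
  rw [Walk.isPath_def, Walk.support_cons, Walk.support_concat]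
  rw [Walk.isPath_def] at hW
  rw [List.nodup_cons]
  constructor
  · simp only [List.mem_append, List.mem_singleton]
    rintro (h | h)
    · exact haW h
    · exact hab h
  · rw [List.nodup_append]
    refine ⟨hW, List.nodup_singleton b, ?_⟩
    intro z hz z' hz'
    rw [List.mem_singleton] at hz'
    subst hz'
    exact fun h => hbW (h ▸ hz)

lemma support_buildPath {a b x y : V} (W : G.Walk x y)
    (ha : G.Adj a x) (hb : G.Adj y b) :
    (Walk.cons ha (W.concat hb)).support = a :: (W.support ++ [b]) := by
  rw [Walk.support_cons, Walk.support_concat]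

end Aux

theorem stmt3 {V : Type*} [Fintype V] (G : SimpleGraph V) (k p : ℕ)
    (hk : 1 ≤ k) (hp : p.Prime) (hpk : k < p)
    (hconn : G.Connected) (himp : IsKImproved G k) (hsep : NoSeparatingClique G)
    (γ : Equiv.Perm V) (hγ : IsGraphAutomorphism G γ) (hord : orderOf γ = p)
    (C : Set V) (hC : IsComponentOf G ({v : V | γ v = v}ᶜ) C) :
    setNeighborhood G C = {v : V | γ v = v} := by
  classical
  obtain ⟨hCne, hCsub, hCconn, hCclosed⟩ := hC
  set F : Set V := {v : V | γ v = v} with hFdef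
  set S : Set V := setNeighborhood G C with hSdef
  have hmemS : ∀ v : V, v ∈ S ↔ (v ∉ C ∧ ∃ u ∈ C, G.Adj v u) := fun v => Iff.rfl
  have hpow : ∀ s : ℤ, ∀ u v : V, G.Adj ((γ ^ s) u) ((γ ^ s) v) ↔ G.Adj u v :=
    fun s => zpow_isAuto hγ s
  have hcomp : ∀ s t : ℤ, ∀ x : V, (γ ^ s) ((γ ^ t) x) = (γ ^ (s + t)) x := by
    intro s t x
    rw [← Equiv.Perm.mul_apply, ← zpow_add]
  -- the easy inclusion
  have hSsubF : S ⊆ F := by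
    intro v hv
    obtain ⟨hvC, u, huC, hadj⟩ := hv
    by_contra hvF
    exact hvC (hCclosed u huC v hvF hadj.symm)
  have hSC : ∀ v ∈ S, v ∉ C := fun v hv => hv.1
  -- the union of translates of C
  set D : Set V := {x : V | ∃ n : ℤ, (γ ^ n) x ∈ C} with hDdef
  have hCD : C ⊆ D := fun x hx => ⟨0, by simpa using hx⟩
  have hDinv : ∀ (s : ℤ), ∀ x ∈ D, (γ ^ s) x ∈ D := by
    rintro s x ⟨n, hn⟩
    refine ⟨n - s, ?_⟩
    rw [hcomp]
    simpa [sub_add_cancel] using hn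
  have hDF : ∀ x ∈ D, γ x ≠ x := by
    rintro x ⟨n, hn⟩ hx
    have hc : (γ ^ n) x ∈ ({v : V | γ v = v}ᶜ) := hCsub hn
    apply hc
    show γ ((γ ^ n) x) = (γ ^ n) x
    have hcomm : γ * γ ^ n = γ ^ n * γ := ((Commute.refl γ).zpow_right n).eq
    rw [← Equiv.Perm.mul_apply, hcomm, Equiv.Perm.mul_apply, hx]
  have hFD : ∀ x ∈ F, x ∉ D := fun x hx hxD => hDF x hxD hx
  -- freeness of the action of nontrivial powers on D
  have hfree : ∀ s : ℤ, ¬ ((p : ℤ) ∣ s) → ∀ x ∈ D, (γ ^ s) x ≠ x := by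
    intro s hs x hx hfix
    apply hDF x hx
    have hppow : (γ ^ (p : ℤ)) = 1 := by
      rw [zpow_natCast, ← hord, pow_orderOf_eq_one]
    have hnd : ¬ (p ∣ s.natAbs) := fun h => hs (Int.natCast_dvd.mpr h)
    have hcop : Nat.Coprime s.natAbs p := (hp.coprime_iff_not_dvd.mpr hnd).symm
    have hgcd : Int.gcd s (p : ℤ) = 1 := by
      simpa [Int.gcd] using hcop
    have hbez := Int.gcd_eq_gcd_ab s (p : ℤ)
    rw [hgcd] at hbez
    have h1 : γ x = (γ ^ (s * Int.gcdA s (p:ℤ) + (p:ℤ) * Int.gcdB s (p:ℤ))) x := by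
      rw [← hbez]
      simp
    rw [h1, zpow_add, Equiv.Perm.mul_apply, zpow_mul, zpow_mul, hppow, one_zpow]
    simp only [Equiv.Perm.one_apply]
    exact fix_zpow (γ ^ s) x hfix _
  -- S is a clique
  have hclique : G.IsClique S := by
    rw [isClique_iff]
    intro a ha b hb hab
    by_contra hnadj
    have haF : a ∈ F := hSsubF ha
    have hbF : b ∈ F := hSsubF hb
    have hafix : γ a = a := haF
    have hbfix : γ b = b := hbF
    obtain ⟨haC, ua, huaC, hadja⟩ := ha
    obtain ⟨hbC, ub, hubC, hadjb⟩ := hb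
    set A : Set V := {x | x ∈ D ∧ G.Adj a x} with hAdef
    set B : Set V := {x | x ∈ D ∧ G.Adj b x} with hBdef
    have hAinv : ∀ s : ℤ, ∀ x ∈ A, (γ ^ s) x ∈ A := by
      rintro s x ⟨hxD, hxa⟩
      refine ⟨hDinv s x hxD, ?_⟩
      have h2 := (hpow s a x).2 hxa
      rwa [fix_zpow γ a hafix s] at h2
    have hBinv : ∀ s : ℤ, ∀ x ∈ B, (γ ^ s) x ∈ B := by
      rintro s x ⟨hxD, hxb⟩
      refine ⟨hDinv s x hxD, ?_⟩
      have h2 := (hpow s b x).2 hxb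
      rwa [fix_zpow γ b hbfix s] at h2
    have haD : a ∉ D := hFD a haF
    have hbD : b ∉ D := hFD b hbF
    -- candidate walks
    have hcand : ∃ n : ℕ, ∃ x y : V, x ∈ A ∧ y ∈ B ∧
        ∃ w : G.Walk x y, (∀ z ∈ w.support, z ∈ D) ∧ w.length = n := by
      obtain ⟨w0⟩ := hCconn.preconnected ⟨ua, huaC⟩ ⟨ub, hubC⟩
      refine ⟨_, ua, ub, ⟨hCD huaC, hadja⟩, ⟨hCD hubC, hadjb⟩,
        w0.map (SimpleGraph.Embedding.induce C).toHom, ?_, rfl⟩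
      intro z hz
      erw [Walk.support_map, List.mem_map] at hz
      obtain ⟨⟨z', hz'⟩, _, rfl⟩ := hz
      exact hCD hz'
    set m := Nat.find hcand with hmdef
    obtain ⟨x0, y0, hx0, hy0, W0, hW0D, hW0len⟩ := Nat.find_spec hcand
    set W := W0.bypass with hWdef
    have hWpath : W.IsPath := W0.bypass_isPath
    have hWD : ∀ z ∈ W.support, z ∈ D := fun z hz => hW0D z (W0.support_bypass_subset hz)
    have hWlen : W.length = m := by
      refine le_antisymm ?_ (Nat.find_le ⟨x0, y0, hx0, hy0, W, hWD, rfl⟩)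
      calc W.length ≤ W0.length := W0.length_bypass_le
        _ = m := hW0len
    have hmin : ∀ (x y : V) (w : G.Walk x y), x ∈ A → y ∈ B →
        (∀ z ∈ w.support, z ∈ D) → m ≤ w.length :=
      fun x y w hx hy hwD => Nat.find_le ⟨x, y, hx, hy, w, hwD, rfl⟩
    -- key disjointness of translates of W
    have hkey : ∀ s : ℤ, ¬ ((p : ℤ) ∣ s) → ∀ z ∈ W.support, ((γ ^ s) z) ∉ W.support := by
      intro s hps z hz hz'
      have e1 : (W.takeUntil z hz).length + (W.dropUntil z hz).length = m := by
        rw [← Walk.length_append, Walk.take_spec, hWlen]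
      have e2 : (W.takeUntil _ hz').length + (W.dropUntil _ hz').length = m := by
        rw [← Walk.length_append, Walk.take_spec, hWlen]
      -- first spliced walk
      have l1 : m ≤ (W.takeUntil _ hz').length + (W.dropUntil z hz).length := by
        have hQ := hmin x0 ((γ ^ s) y0)
          ((W.takeUntil _ hz').append ((W.dropUntil z hz).map (zpowHom G γ hγ s)))
          hx0 (hBinv s y0 hy0) ?_
        · erw [Walk.length_append, Walk.length_map] at hQ; omega
        · intro w hw
          erw [Walk.mem_support_append_iff] at hw
          rcases hw with hw | hw
          · exact hWD w (W.support_takeUntil_subset _ hw)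
          · erw [Walk.support_map, List.mem_map] at hw
            obtain ⟨y, hy, rfl⟩ := hw
            exact hDinv s y (hWD y (W.support_dropUntil_subset _ hy))
      -- second spliced walk
      have hcast : (γ ^ (-s)) ((γ ^ s) z) = z := by rw [hcomp]; simp
      have l2 : m ≤ (W.takeUntil z hz).length + (W.dropUntil _ hz').length := by
        have hQ := hmin x0 ((γ ^ (-s)) y0)
          ((W.takeUntil z hz).append
            (((W.dropUntil _ hz').map (zpowHom G γ hγ (-s))).copy hcast rfl))
          hx0 (hBinv (-s) y0 hy0) ?_
        · erw [Walk.length_append, Walk.length_copy, Walk.length_map] at hQ; omega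
        · intro w hw
          erw [Walk.mem_support_append_iff] at hw
          rcases hw with hw | hw
          · exact hWD w (W.support_takeUntil_subset _ hw)
          · erw [Walk.support_copy, Walk.support_map, List.mem_map] at hw
            obtain ⟨y, hy, rfl⟩ := hw
            exact hDinv (-s) y (hWD y (W.support_dropUntil_subset _ hy))
      have heq : (W.takeUntil z hz).length = (W.takeUntil _ hz').length := by omega
      have g1 : W.getVert (W.takeUntil z hz).length = z := getVert_takeUntil_len W hz
      have g2 : W.getVert (W.takeUntil _ hz').length = (γ ^ s) z := getVert_takeUntil_len W hz'
      have hzz : (γ ^ s) z = z := by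
        conv_rhs => rw [← g1]
        rw [heq]
        exact g2.symm
      exact hfree s hps z (hWD z hz) hzz
    -- adjacency of endpoints of translates
    have hadjA : ∀ s : ℤ, G.Adj a ((γ ^ s) x0) := fun s => (hAinv s x0 hx0).2
    have hadjB : ∀ s : ℤ, G.Adj ((γ ^ s) y0) b := fun s => ((hBinv s y0 hy0).2).symm
    have hadjA' : ∀ s : ℤ, G.Adj a ((zpowHom G γ hγ s) x0) := fun s => hadjA s
    have hadjB' : ∀ s : ℤ, G.Adj ((zpowHom G γ hγ s) y0) b := fun s => hadjB s
    have hmemD : ∀ s : ℤ, ∀ z, z ∈ (W.map (zpowHom G γ hγ s)).support → z ∈ D := by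
      intro s z hzm
      rw [Walk.support_map, List.mem_map] at hzm
      obtain ⟨y, hy, rfl⟩ := hzm
      exact hDinv s y (hWD y hy)
    have hsupmem : ∀ s : ℤ, ∀ z, z ∈ (W.map (zpowHom G γ hγ s)).support ↔
        ∃ y ∈ W.support, (γ ^ s) y = z := by
      intro s z
      rw [Walk.support_map, List.mem_map]
      simp
    have haM : ∀ s : ℤ, a ∉ (W.map (zpowHom G γ hγ s)).support :=
      fun s h => haD (hmemD s a h)
    have hbM : ∀ s : ℤ, b ∉ (W.map (zpowHom G γ hγ s)).support :=
      fun s h => hbD (hmemD s b h)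
    have hMpath : ∀ s : ℤ, (W.map (zpowHom G γ hγ s)).IsPath :=
      fun s => Walk.map_isPath_of_injective (Equiv.injective _) hWpath
    -- non-divisibility for distinct i j < p
    have hndvd : ∀ i j : Fin p, i ≠ j → ¬ ((p : ℤ) ∣ ((j : ℤ) - (i : ℤ))) := by
      intro i j hij hdvd
      have hi := i.isLt
      have hj := j.isLt
      have habs : ((j : ℤ) - (i : ℤ)).natAbs < p := by omega
      have h0 : ((j : ℤ) - (i : ℤ)).natAbs ≠ 0 := by
        intro h
        apply hij
        have : (i : ℤ) = (j : ℤ) := by omega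
        exact Fin.ext (by exact_mod_cast this)
      have hdvd' : p ∣ ((j : ℤ) - (i : ℤ)).natAbs := by
        exact Int.natCast_dvd.mp hdvd
      have := Nat.le_of_dvd (Nat.pos_of_ne_zero h0) hdvd'
      omega
    -- the family of paths
    let f : Fin p → G.Path a b := fun i =>
      ⟨Walk.cons (hadjA' (i : ℤ)) ((W.map (zpowHom G γ hγ (i : ℤ))).concat (hadjB' (i : ℤ))),
        buildPath_isPath (W.map (zpowHom G γ hγ (i : ℤ))) (hMpath _) (hadjA' _) (hadjB' _)
          (haM _) (hbM _) hab⟩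
    have hfsup : ∀ i : Fin p, (f i).val.support =
        a :: ((W.map (zpowHom G γ hγ (i : ℤ))).support ++ [b]) := by
      intro i
      exact support_buildPath _ _ _
    have hmem_iff : ∀ (i : Fin p) (w : V), w ∈ (f i).val.support ↔
        (w = a ∨ w ∈ (W.map (zpowHom G γ hγ (i : ℤ))).support ∨ w = b) := by
      intro i w
      rw [hfsup i]
      simp
    -- translated supports are disjoint
    have hdisjsup : ∀ i j : Fin p, i ≠ j → ∀ w,
        w ∈ (W.map (zpowHom G γ hγ (i : ℤ))).support →
        w ∈ (W.map (zpowHom G γ hγ (j : ℤ))).support → False := by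
      intro i j hij w hwi hwj
      rw [hsupmem] at hwi hwj
      obtain ⟨z1, hz1, hwz1⟩ := hwi
      obtain ⟨z2, hz2, hwz2⟩ := hwj
      have hz12 : z1 = (γ ^ ((j : ℤ) - (i : ℤ))) z2 := by
        have : (γ ^ (-(j : ℤ))) ((γ ^ (j : ℤ)) z2) = (γ ^ (-(j : ℤ))) ((γ ^ (i : ℤ)) z1) := by
          rw [hwz1, hwz2]
        rw [hcomp, hcomp] at this
        simp only [neg_add_cancel] at this
        rw [show (-(j:ℤ) + (i:ℤ)) = -((j:ℤ) - (i:ℤ)) by ring] at this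
        have h2 := congrArg (γ ^ ((j : ℤ) - (i : ℤ))) this.symm
        rw [hcomp] at h2
        simp only [add_neg_cancel] at h2
        simpa using h2
      exact hkey _ (hndvd i j hij) z2 hz2 (hz12 ▸ hz1)
    -- injectivity
    have hinj : Function.Injective f := by
      intro i j hfij
      by_contra hij
      have hmem : (γ ^ (i : ℤ)) x0 ∈ (W.map (zpowHom G γ hγ (i : ℤ))).support := by
        rw [hsupmem]
        exact ⟨x0, W.start_mem_support, rfl⟩
      have hmem2 : (γ ^ (i : ℤ)) x0 ∈ (f j).val.support := by
        rw [← hfij]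
        rw [hmem_iff]
        exact Or.inr (Or.inl hmem)
      rw [hmem_iff] at hmem2
      rcases hmem2 with h | h | h
      · exact haD (h ▸ hDinv (i : ℤ) x0 hx0.1)
      · exact hdisjsup i j hij _ hmem h
      · exact hbD (h ▸ hDinv (i : ℤ) x0 hx0.1)
    -- internal disjointness
    have hdisj : ∀ i j : Fin p, i ≠ j → InternallyDisjoint (f i).val (f j).val := by
      intro i j hij w hwi hwj
      rw [hmem_iff] at hwi hwj
      rcases hwi with h | h | h
      · exact Or.inl h
      · rcases hwj with h' | h' | h'
        · exact Or.inl h'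
        · exact absurd (hdisjsup i j hij w h h') (by simp)
        · exact Or.inr h'
      · exact Or.inr h
    have := himp a b hab hnadj p f hinj hdisj
    omega
  -- conclusion
  refine Set.Subset.antisymm hSsubF ?_
  intro x hxF
  by_contra hxS
  have hxC : x ∉ C := fun h => (hCsub h) hxF
  obtain ⟨c, hc⟩ := hCne
  have hpre := hsep S hclique
  have hxSc : x ∈ (Sᶜ : Set V) := hxS
  have hcSc : c ∈ (Sᶜ : Set V) := fun h => (hSC c h) hc
  obtain ⟨w⟩ := hpre ⟨x, hxSc⟩ ⟨c, hcSc⟩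
  have hWsupp : ∀ z ∈ (w.map (SimpleGraph.Embedding.induce (Sᶜ : Set V)).toHom).support,
      z ∉ S := by
    intro z hz
    rw [Walk.support_map, List.mem_map] at hz
    obtain ⟨⟨z', hz'⟩, _, rfl⟩ := hz
    exact hz'
  exact no_cross (fun v h1 h2 => (hmemS v).mpr ⟨h1, h2⟩) _ hc hWsupp hxC
end

section
/- Let G be a finite simple graph, let p be a prime, let γ be an automorphism of G of order p, and let C be a connected component of the subgraph induced on V(G) \ fix(γ). Then for any two distinct vertices u and u' in the neighborhood N(C) of C (the set of vertices outside C adjacent to some vertex of C), there exist p pairwise internally vertex-disjoint paths from u to u' in G. -/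
open SimpleGraph

section
variable {V : Type*} {G : SimpleGraph V}

def SOrb (γ : Equiv.Perm V) (x y : V) : Prop := ∃ n : ℕ, (γ ^ n) x = y

variable {γ : Equiv.Perm V} {p : ℕ}

lemma sorb_refl (x : V) : SOrb γ x x := ⟨0, rfl⟩

lemma sorb_trans {x y z : V} (h1 : SOrb γ x y) (h2 : SOrb γ y z) : SOrb γ x z := by
  obtain ⟨n, rfl⟩ := h1; obtain ⟨m, rfl⟩ := h2
  exact ⟨m + n, by rw [pow_add]; rfl⟩

lemma sorb_symm (hp1 : γ ^ p = 1) (hp0 : 0 < p) {x y : V} (h : SOrb γ x y) : SOrb γ y x := by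
  obtain ⟨n, rfl⟩ := h
  refine ⟨n * p - n, ?_⟩
  have hle : n ≤ n * p := Nat.le_mul_of_pos_right n hp0
  have : (γ ^ (n * p - n)) ((γ ^ n) x) = (γ ^ (n * p - n + n)) x := by
    rw [pow_add]; rfl
  rw [this, Nat.sub_add_cancel hle, mul_comm, pow_mul, hp1, one_pow]; rfl

lemma fix_pow {v : V} (h : γ v = v) (n : ℕ) : (γ ^ n) v = v := by
  induction n with
  | zero => rfl
  | succ k ih => rw [pow_succ, Equiv.Perm.mul_apply, h, ih]

lemma nonfix_pow {v : V} (h : γ v ≠ v) (n : ℕ) : γ ((γ ^ n) v) ≠ (γ ^ n) v := by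
  intro hc
  apply h
  have : (γ ^ n) (γ v) = γ ((γ ^ n) v) := by
    rw [← Equiv.Perm.mul_apply, ← Equiv.Perm.mul_apply]
    congr 1
    exact (Commute.self_pow γ n).symm ▸ (pow_mul_comm' γ n).symm
  exact (γ ^ n).injective (by rw [this, hc])

lemma free_act (hp : p.Prime) (hord : orderOf γ = p) {x : V} (hx : γ x ≠ x)
    {n : ℕ} (h : (γ ^ n) x = x) : p ∣ n := by
  by_contra hnd
  have hcop : Nat.Coprime n p := ((hp.coprime_iff_not_dvd).mpr hnd).symm
  obtain ⟨a, -, ha⟩ := Nat.exists_mul_mod_eq_one_of_coprime hcop hp.one_lt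
  have h1' : ∀ b : ℕ, ((γ ^ n) ^ b) x = x := by
    intro b
    induction b with
    | zero => rfl
    | succ k ih => rw [pow_succ, Equiv.Perm.mul_apply, h, ih]
  have h1 : (γ ^ (n * a)) x = x := by rw [pow_mul]; exact h1' a
  have h2 : γ ^ (n * a) = γ := by
    rw [← pow_mod_orderOf, hord, ha, pow_one]
  exact hx (h2 ▸ h1)

lemma adj_pow (hγ : ∀ u v : V, G.Adj (γ u) (γ v) ↔ G.Adj u v) (n : ℕ) (a b : V) :
    G.Adj ((γ ^ n) a) ((γ ^ n) b) ↔ G.Adj a b := by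
  induction n with
  | zero => rfl
  | succ k ih => rw [pow_succ', Equiv.Perm.mul_apply, Equiv.Perm.mul_apply, hγ, ih]

/-- Key construction: given a walk in the induced graph on `C` from `a` to `b`,
there is a path in `G` from some vertex in the orbit of `a` to `b`, staying in `C`
and meeting each orbit at most once. -/
lemma key_path [DecidableEq V] (hp : p.Prime) (hord : orderOf γ = p)
    (hγ : ∀ u v : V, G.Adj (γ u) (γ v) ↔ G.Adj u v)
    (C : Set V) (hCA : ∀ v ∈ C, γ v ≠ v)
    (hcl : ∀ a ∈ C, ∀ b : V, γ b ≠ b → G.Adj a b → b ∈ C) :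
    ∀ (a b : ↥C) (_ : (G.induce C).Walk a b),
      ∃ a'' : V, a'' ∈ C ∧ SOrb γ (a : V) a'' ∧
        ∃ L : G.Walk a'' (b : V), L.IsPath ∧ (∀ x ∈ L.support, x ∈ C) ∧
          (∀ x ∈ L.support, ∀ y ∈ L.support, SOrb γ x y → x = y) := by
  have hp1 : γ ^ p = 1 := hord ▸ pow_orderOf_eq_one γ
  have hp0 : 0 < p := hp.pos
  intro a b W
  induction W with
  | nil =>
    rename_i a
    exact ⟨(a : V), a.2, sorb_refl _, Walk.nil, Walk.IsPath.nil,
      by simp [a.2], by intro x hx y hy _; simp at hx hy; rw [hx, hy]⟩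
  | @cons a m b h q ih =>
    obtain ⟨m'', hm''C, ⟨n, hn⟩, L, hLp, hLC, hLinj⟩ := ih
    have hadjG : G.Adj (a : V) (m : V) := h
    have ha'' : G.Adj ((γ ^ n) (a : V)) m'' := by
      rw [← hn]; exact (adj_pow hγ n _ _).mpr hadjG
    have ha''nf : γ ((γ ^ n) (a : V)) ≠ (γ ^ n) (a : V) := nonfix_pow (hCA _ a.2) n
    have ha''C : (γ ^ n) (a : V) ∈ C := hcl m'' hm''C _ ha''nf ha''.symm
    by_cases hz : ∃ z ∈ L.support, SOrb γ ((γ ^ n) (a : V)) z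
    · obtain ⟨z, hzS, hzo⟩ := hz
      refine ⟨z, hLC z hzS, sorb_trans ⟨n, rfl⟩ hzo, L.dropUntil z hzS,
        hLp.dropUntil hzS, ?_, ?_⟩
      · exact fun x hx => hLC x (Walk.support_dropUntil_subset _ hzS hx)
      · intro x hx y hy hxy
        exact hLinj x (Walk.support_dropUntil_subset _ hzS hx)
          y (Walk.support_dropUntil_subset _ hzS hy) hxy
    · push_neg at hz
      have hns : (γ ^ n) (a : V) ∉ L.support := fun hmem => hz _ hmem (sorb_refl _)
      refine ⟨(γ ^ n) (a : V), ha''C, ⟨n, rfl⟩, Walk.cons ha'' L, hLp.cons hns, ?_, ?_⟩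
      · intro x hx
        rw [Walk.support_cons, List.mem_cons] at hx
        rcases hx with rfl | hx
        · exact ha''C
        · exact hLC x hx
      · intro x hx y hy hxy
        rw [Walk.support_cons, List.mem_cons] at hx hy
        rcases hx with rfl | hx
        · rcases hy with rfl | hy
          · rfl
          · exact absurd hxy (fun hc => hz y hy hc)
        · rcases hy with rfl | hy
          · exact absurd (sorb_symm hp1 hp0 hxy) (fun hc => hz x hx hc)
          · exact hLinj x hx y hy hxy

end

theorem stmt4 {V : Type*} [Fintype V] (G : SimpleGraph V) (p : ℕ) (hp : p.Prime)
    (γ : Equiv.Perm V) (hγ : IsGraphAutomorphism G γ) (hord : orderOf γ = p)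
    (C : Set V) (hC : IsComponentOf G ({v : V | γ v = v}ᶜ) C)
    (u u' : V) (hu : u ∈ setNeighborhood G C) (hu' : u' ∈ setNeighborhood G C)
    (hne : u ≠ u') :
    ∃ f : Fin p → G.Path u u', Function.Injective f ∧
      ∀ i j : Fin p, i ≠ j → InternallyDisjoint (f i).val (f j).val := by
  classical
  obtain ⟨hCne, hCA, hCconn, hcl⟩ := hC
  have hCA' : ∀ v ∈ C, γ v ≠ v := fun v hv => hCA hv
  have hcl' : ∀ a ∈ C, ∀ b : V, γ b ≠ b → G.Adj a b → b ∈ C :=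
    fun a ha b hb hab => hcl a ha b hb hab
  obtain ⟨huC, c, hcC, huc⟩ := hu
  obtain ⟨hu'C, c', hc'C, hu'c'⟩ := hu'
  -- u and u' are fixed by γ
  have hufix : γ u = u := by
    by_contra hnf
    exact huC (hcl c hcC u hnf huc.symm)
  have hu'fix : γ u' = u' := by
    by_contra hnf
    exact hu'C (hcl c' hc'C u' hnf hu'c'.symm)
  -- a walk in the induced graph from c' to c
  obtain ⟨W⟩ := hCconn.preconnected ⟨c', hc'C⟩ ⟨c, hcC⟩
  obtain ⟨c'', hc''C, ⟨n, hn⟩, L, hLp, hLC, hLinj⟩ :=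
    key_path hp hord hγ C hCA' hcl' ⟨c', hc'C⟩ ⟨c, hcC⟩ W
  -- reverse it: path from c to c''
  set Lr : G.Walk c c'' := L.reverse with hLr
  have hLrp : Lr.IsPath := hLp.reverse
  have hLrC : ∀ x ∈ Lr.support, x ∈ C := by
    intro x hx; exact hLC x (by rwa [Walk.support_reverse, List.mem_reverse] at hx)
  have hLrinj : ∀ x ∈ Lr.support, ∀ y ∈ Lr.support, SOrb γ x y → x = y := by
    intro x hx y hy
    rw [hLr, Walk.support_reverse, List.mem_reverse] at hx hy
    exact hLinj x hx y hy
  -- the graph homomorphism given by γ^i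
  let φ : ℕ → G →g G := fun i => ⟨⇑(γ ^ i), fun hadj => (adj_pow hγ i _ _).mpr hadj⟩
  have hφ : ∀ (i : ℕ) (x : V), (φ i) x = (γ ^ i) x := fun i x => rfl
  let M : (i : ℕ) → G.Walk ((γ ^ i) c) ((γ ^ i) c'') := fun i => Lr.map (φ i)
  have hMsupp : ∀ (i : ℕ) (w : V), w ∈ (M i).support ↔ ∃ x ∈ Lr.support, (γ ^ i) x = w := by
    intro i w
    rw [Walk.support_map, List.mem_map]
    simp only [hφ]
  have hMnf : ∀ (i : ℕ) (w : V), w ∈ (M i).support → γ w ≠ w := by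
    intro i w hw
    obtain ⟨x, hx, rfl⟩ := (hMsupp i w).mp hw
    exact nonfix_pow (hCA' x (hLrC x hx)) i
  have hMu : ∀ (i : ℕ) (w : V), w ∈ (M i).support → w ≠ u := by
    intro i w hw h; exact hMnf i w hw (h ▸ hufix)
  have hMu' : ∀ (i : ℕ) (w : V), w ∈ (M i).support → w ≠ u' := by
    intro i w hw h; exact hMnf i w hw (h ▸ hu'fix)
  have hMp : ∀ i : ℕ, (M i).IsPath :=
    fun i => Walk.map_isPath_of_injective (γ ^ i).injective hLrp
  -- the edges at the ends
  have h1 : ∀ i : ℕ, G.Adj u ((γ ^ i) c) := by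
    intro i
    have := (adj_pow hγ i u c).mpr huc
    rwa [fix_pow hufix i] at this
  have hu'c'' : G.Adj u' c'' := by
    have := (adj_pow hγ n u' c').mpr hu'c'
    rwa [fix_pow hu'fix n, hn] at this
  have h2 : ∀ i : ℕ, G.Adj ((γ ^ i) c'') u' := by
    intro i
    have := (adj_pow hγ i u' c'').mpr hu'c''
    rw [fix_pow hu'fix i] at this
    exact this.symm
  -- the walks
  let Q : Fin p → G.Walk u u' := fun i => Walk.cons (h1 i) ((M i).concat (h2 i))
  have hQsupp : ∀ i : Fin p, (Q i).support = u :: ((M (i : ℕ)).support ++ [u']) := by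
    intro i
    show (Walk.cons _ _).support = _
    rw [Walk.support_cons, Walk.support_concat]
  have hQp : ∀ i : Fin p, (Q i).IsPath := by
    intro i
    apply Walk.IsPath.mk'
    rw [hQsupp i]
    refine List.nodup_cons.mpr ⟨?_, ?_⟩
    · intro hmem
      rcases List.mem_append.mp hmem with hmem | hmem
      · exact hMu _ u hmem rfl
      · exact hne (List.mem_singleton.mp hmem)
    · refine List.Nodup.append (hMp (i : ℕ)).support_nodup (List.nodup_singleton u') ?_
      intro w hw hw'
      exact hMu' _ w hw (List.mem_singleton.mp hw')
  -- core disjointness lemma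
  have haux : ∀ i j : ℕ, i ≤ j → j < p → ∀ x y : V, x ∈ Lr.support → y ∈ Lr.support →
      (γ ^ i) x = (γ ^ j) y → i = j := by
    intro i j hij hjp x y hx hy heq
    have hj : j = i + (j - i) := (Nat.add_sub_cancel' hij).symm
    have heq2 : (γ ^ i) x = (γ ^ i) ((γ ^ (j - i)) y) := by
      rw [heq, ← Equiv.Perm.mul_apply, ← pow_add, ← hj]
    have hyx : (γ ^ (j - i)) y = x := ((γ ^ i).injective heq2).symm
    have hxy : x = y := (hLrinj y hy x hx ⟨j - i, hyx⟩).symm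
    have hxx : (γ ^ (j - i)) x = x := by rw [hxy] at hyx ⊢; exact hyx
    have hfree : p ∣ j - i := free_act hp hord (hCA' x (hLrC x hx)) hxx
    have h0 : j - i = 0 := Nat.eq_zero_of_dvd_of_lt hfree (lt_of_le_of_lt (Nat.sub_le j i) hjp)
    omega
  have hcore : ∀ (i j : Fin p) (x y : V), x ∈ Lr.support → y ∈ Lr.support →
      (γ ^ (i : ℕ)) x = (γ ^ (j : ℕ)) y → i = j := by
    intro i j x y hx hy heq
    rcases le_total (i : ℕ) (j : ℕ) with hle | hle
    · exact Fin.ext (haux _ _ hle j.isLt x y hx hy heq)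
    · exact (Fin.ext (haux _ _ hle i.isLt y x hy hx heq.symm)).symm
  -- membership analysis
  have hmemQ : ∀ (i : Fin p) (w : V), w ∈ (Q i).support →
      w = u ∨ w = u' ∨ w ∈ (M (i : ℕ)).support := by
    intro i w hw
    rw [hQsupp i, List.mem_cons, List.mem_append, List.mem_singleton] at hw
    tauto
  refine ⟨fun i => ⟨Q i, hQp i⟩, ?_, ?_⟩
  · intro i j hfij
    by_contra hij
    have hsupeq : (Q i).support = (Q j).support := by
      have : Q i = Q j := congrArg Subtype.val hfij
      rw [this]
    have hc1 : (γ ^ (i : ℕ)) c ∈ (M (i : ℕ)).support :=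
      (hMsupp _ _).mpr ⟨c, Lr.start_mem_support, rfl⟩
    have hcQ : (γ ^ (i : ℕ)) c ∈ (Q j).support := by
      rw [← hsupeq, hQsupp i]
      exact List.mem_cons_of_mem _ (List.mem_append_left _ hc1)
    rcases hmemQ j _ hcQ with h | h | h
    · exact hMu _ _ hc1 h
    · exact hMu' _ _ hc1 h
    · obtain ⟨y, hy, hyeq⟩ := (hMsupp _ _).mp h
      exact hij (hcore i j c y Lr.start_mem_support hy hyeq.symm)
  · intro i j hij w hwi hwj
    rcases hmemQ i w hwi with h | h | hmi
    · exact Or.inl h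
    · exact Or.inr h
    rcases hmemQ j w hwj with h | h | hmj
    · exact Or.inl h
    · exact Or.inr h
    obtain ⟨x, hx, hxeq⟩ := (hMsupp _ _).mp hmi
    obtain ⟨y, hy, hyeq⟩ := (hMsupp _ _).mp hmj
    exact absurd (hcore i j x y hx hy (hxeq.trans hyeq.symm)) hij
end

section
/- Let k ≥ 1 and let p > k be a prime. Let G be a finite simple graph that is connected, k-improved, and has no separating clique. Let Γ be an abelian subgroup of the automorphism group of G in which every nontrivial element has order p. Then the union over all nontrivial γ ∈ Γ of the fixed-point sets fix(γ) is a clique in G. -/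
open SimpleGraph

namespace Stmt5Helpers

variable {V : Type*} {G : SimpleGraph V}

/-- An automorphism as a graph homomorphism. -/
@[reducible] def permHom (G : SimpleGraph V) (γ : Equiv.Perm V) (h : IsGraphAutomorphism G γ) : G →g G :=
  ⟨γ, fun {a b} hab => (h a b).mpr hab⟩

@[simp] lemma permHom_apply (G : SimpleGraph V) (γ : Equiv.Perm V) (h) (x : V) :
    permHom G γ h x = γ x := rfl

lemma pow_apply_comm (γ : Equiv.Perm V) (i j : ℕ) (x : V) :
    (γ ^ i) ((γ ^ j) x) = (γ ^ (i + j)) x := by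
  rw [pow_add, Equiv.Perm.mul_apply]

lemma pow_fix {γ : Equiv.Perm V} {x : V} (h : γ x = x) (i : ℕ) : (γ ^ i) x = x := by
  induction i with
  | zero => simp
  | succ n ih => rw [pow_succ, Equiv.Perm.mul_apply, h, ih]

lemma pow_notfix {γ : Equiv.Perm V} {x : V} (h : γ x ≠ x) (m : ℕ) :
    γ ((γ ^ m) x) ≠ (γ ^ m) x := by
  intro hc
  apply h
  apply (γ ^ m).injective
  have h1 : γ ((γ ^ m) x) = (γ ^ m) (γ x) := by
    calc γ ((γ ^ m) x) = (γ ^ (1 + m)) x := by rw [← pow_apply_comm, pow_one]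
    _ = (γ ^ (m + 1)) x := by rw [Nat.add_comm]
    _ = (γ ^ m) (γ x) := by rw [← pow_apply_comm, pow_one]
  rw [h1] at hc
  exact hc

lemma pow_eq_mod (γ : Equiv.Perm V) {p : ℕ} (hγp : γ ^ p = 1) (n : ℕ) :
    γ ^ n = γ ^ (n % p) := by
  conv_lhs => rw [← Nat.div_add_mod n p]
  rw [pow_add, pow_mul, hγp, one_pow, one_mul]

lemma pow_cancel {γ : Equiv.Perm V} {p : ℕ} (hγp : γ ^ p = 1) (hp0 : 0 < p)
    (i : ℕ) (x : V) : (γ ^ (p - i % p)) ((γ ^ i) x) = x := by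
  have h4 : i % p < p := Nat.mod_lt i hp0
  rw [pow_apply_comm, pow_add, pow_eq_mod γ hγp i, ← pow_add,
    Nat.sub_add_cancel h4.le, hγp, Equiv.Perm.one_apply]

lemma not_fix_pow_lt {γ : Equiv.Perm V} {p : ℕ} (hp : p.Prime) (hγp : γ ^ p = 1)
    {x : V} (hx : γ x ≠ x) {d : ℕ} (hd0 : d ≠ 0) (hdp : d < p)
    (hfix : (γ ^ d) x = x) : False := by
  have hnd : ¬ p ∣ d := Nat.not_dvd_of_pos_of_lt (Nat.pos_of_ne_zero hd0) hdp
  have hco : Nat.Coprime d p :=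
    Nat.coprime_comm.mp ((Nat.Prime.coprime_iff_not_dvd hp).mpr hnd)
  obtain ⟨b, -, hb⟩ := Nat.exists_mul_mod_eq_one_of_coprime hco hp.one_lt
  have h1 : (γ ^ (d * b)) x = x := by
    rw [pow_mul]; exact pow_fix hfix b
  rw [pow_eq_mod γ hγp (d * b), hb, pow_one] at h1
  exact hx h1

lemma pow_apply_injOn {γ : Equiv.Perm V} {p : ℕ} (hp : p.Prime) (hγp : γ ^ p = 1)
    {x : V} (hx : γ x ≠ x) :
    ∀ i < p, ∀ j < p, (γ ^ i) x = (γ ^ j) x → i = j := by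
  have key : ∀ i j : ℕ, i < j → j < p → (γ ^ i) x = (γ ^ j) x → False := by
    intro i j hij hjp he
    have h1 : (γ ^ (j - i)) ((γ ^ i) x) = (γ ^ i) x := by
      rw [pow_apply_comm, Nat.sub_add_cancel (le_of_lt hij)]
      exact he.symm
    exact not_fix_pow_lt hp hγp (pow_notfix hx i) (by omega) (by omega) h1
  intro i hi j hj he
  rcases Nat.lt_trichotomy i j with h | h | h
  · exact absurd (key i j h hj he) not_false
  · exact h
  · exact absurd (key j i h hi he.symm) not_false

/-- `y` is in the `γ`-orbit of `x` (using exponents `< p`). -/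
def Orb (γ : Equiv.Perm V) (p : ℕ) (x y : V) : Prop := ∃ i, i < p ∧ (γ ^ i) x = y

lemma orb_refl {γ : Equiv.Perm V} {p : ℕ} (hp0 : 0 < p) (x : V) : Orb γ p x x :=
  ⟨0, hp0, by simp⟩

lemma orb_symm {γ : Equiv.Perm V} {p : ℕ} (hγp : γ ^ p = 1) (hp0 : 0 < p) {x y : V} :
    Orb γ p x y → Orb γ p y x := by
  rintro ⟨i, hi, rfl⟩
  rcases Nat.eq_zero_or_pos i with rfl | hipos
  · simpa using orb_refl (γ := γ) hp0 x
  · refine ⟨p - i, by omega, ?_⟩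
    rw [pow_apply_comm, Nat.sub_add_cancel hi.le, hγp, Equiv.Perm.one_apply]

lemma orb_trans {γ : Equiv.Perm V} {p : ℕ} (hγp : γ ^ p = 1) (hp0 : 0 < p) {x y z : V} :
    Orb γ p x y → Orb γ p y z → Orb γ p x z := by
  rintro ⟨i, hi, rfl⟩ ⟨j, hj, rfl⟩
  refine ⟨(j + i) % p, Nat.mod_lt _ hp0, ?_⟩
  rw [← pow_eq_mod γ hγp, pow_apply_comm]

lemma orb_pow_iff {γ : Equiv.Perm V} {p : ℕ} (m : ℕ) {x y : V} :
    Orb γ p ((γ ^ m) x) ((γ ^ m) y) ↔ Orb γ p x y := by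
  constructor
  · rintro ⟨i, hi, he⟩
    refine ⟨i, hi, ?_⟩
    apply (γ ^ m).injective
    rw [pow_apply_comm γ m i x, Nat.add_comm m i, ← pow_apply_comm γ i m x]
    exact he
  · rintro ⟨i, hi, he⟩
    refine ⟨i, hi, ?_⟩
    rw [pow_apply_comm γ i m x, Nat.add_comm i m, ← pow_apply_comm γ m i x, he]

/-- No two distinct members of `l` lie in a common `γ`-orbit. -/
def OrbInj (γ : Equiv.Perm V) (p : ℕ) (l : List V) : Prop :=
  ∀ x ∈ l, ∀ y ∈ l, Orb γ p x y → x = y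



lemma lemA {p : ℕ} (hp : p.Prime) (γ : Equiv.Perm V) (hγp : γ ^ p = 1)
    (hiso : ∀ i : ℕ, IsGraphAutomorphism G (γ ^ i))
    (K : Set V) (hK : ∀ x ∈ K, ∀ i : ℕ, (γ ^ i) x ∈ K) :
    ∀ {a b : V} (w : G.Walk a b), (∀ x ∈ w.support, γ x ≠ x) → b ∈ K →
    ∃ b', b' ∈ K ∧ ∃ w' : G.Walk a b',
      (∀ x ∈ w'.support, γ x ≠ x) ∧ OrbInj γ p w'.support := by
  classical
  have hp0 : 0 < p := hp.pos
  intro a b w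
  induction w with
  | nil =>
    intro hw hb
    refine ⟨_, hb, Walk.nil, hw, ?_⟩
    intro x hx y hy _
    simp only [Walk.support_nil, List.mem_singleton] at hx hy
    rw [hx, hy]
  | @cons a c b h q ih =>
    intro hw hb
    have hqW : ∀ x ∈ q.support, γ x ≠ x := fun x hx =>
      hw x (by rw [Walk.support_cons]; exact List.mem_cons_of_mem _ hx)
    obtain ⟨b', hb', w₁, hw₁, hinj₁⟩ := ih hqW hb
    by_cases hz : ∃ z ∈ w₁.support, Orb γ p a z
    · obtain ⟨z, hzs, i, hip, hiz⟩ := hz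
      have hσz : (γ ^ (p - i)) z = a := by
        rw [← hiz, pow_apply_comm, Nat.sub_add_cancel hip.le, hγp, Equiv.Perm.one_apply]
      subst hσz
      refine ⟨(γ ^ (p - i)) b', hK b' hb' (p - i), ?_⟩
      refine ⟨(w₁.dropUntil z hzs).map (permHom G (γ ^ (p - i)) (hiso (p - i))), ?_, ?_⟩
      · intro x hx
        rw [Walk.support_map] at hx
        obtain ⟨y, hy, rfl⟩ := List.mem_map.mp hx
        have hyW : γ y ≠ y := hw₁ y (Walk.support_dropUntil_subset w₁ hzs hy)
        simpa using pow_notfix hyW (p - i)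
      · intro x hx y hy horb
        rw [Walk.support_map] at hx hy
        obtain ⟨x₀, hx₀, rfl⟩ := List.mem_map.mp hx
        obtain ⟨y₀, hy₀, rfl⟩ := List.mem_map.mp hy
        have h1 : Orb γ p x₀ y₀ := by
          rw [← orb_pow_iff (p - i) (x := x₀) (y := y₀)]
          simpa using horb
        have h2 : x₀ = y₀ :=
          hinj₁ x₀ (Walk.support_dropUntil_subset w₁ hzs hx₀)
            y₀ (Walk.support_dropUntil_subset w₁ hzs hy₀) h1
        rw [h2]
    · refine ⟨b', hb', Walk.cons h w₁, ?_, ?_⟩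
      · intro x hx
        rw [Walk.support_cons] at hx
        rcases List.mem_cons.mp hx with rfl | hx'
        · exact hw x (Walk.start_mem_support _)
        · exact hw₁ x hx'
      · intro x hx y hy horb
        rw [Walk.support_cons] at hx hy
        rcases List.mem_cons.mp hx with rfl | hx' <;> rcases List.mem_cons.mp hy with rfl | hy'
        · rfl
        · exact absurd ⟨y, hy', horb⟩ hz
        · exact absurd ⟨x, hx', orb_symm hγp hp0 horb⟩ hz
        · exact hinj₁ x hx' y hy' horb


lemma lemC {k p : ℕ} (hp : p.Prime) (hpk : k < p) (himp : IsKImproved G k)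
    (γ : Equiv.Perm V) (hγp : γ ^ p = 1)
    (hiso : ∀ i : ℕ, IsGraphAutomorphism G (γ ^ i))
    (s t : V) (hst : s ≠ t) (hnadj : ¬ G.Adj s t) (hs : γ s = s)
    (b₀ : V)
    (hKt : ∀ i : ℕ, (γ ^ i) b₀ ≠ t → G.Adj ((γ ^ i) b₀) t)
    (htK : γ t = t ∨ ∃ i : ℕ, (γ ^ i) b₀ = t)
    (a : V) (hsa : G.Adj s a)
    (hat : γ t = t ∨ ∀ i : ℕ, (γ ^ i) b₀ ≠ a)
    (w₀ : G.Walk a b₀) (hw₀ : ∀ z ∈ w₀.support, γ z ≠ z) : False := by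
  classical
  have hp0 : 0 < p := hp.pos
  set K : Set V := {x | Orb γ p b₀ x} with hKdef
  have hKinv : ∀ x ∈ K, ∀ i : ℕ, (γ ^ i) x ∈ K := by
    rintro x ⟨j, hj, rfl⟩ i
    exact ⟨(i + j) % p, Nat.mod_lt _ hp0, by rw [← pow_eq_mod γ hγp, pow_apply_comm]⟩
  have hb₀K : b₀ ∈ K := orb_refl hp0 b₀
  obtain ⟨b', hb'K, w₁, hw₁, hinj₁⟩ := lemA hp γ hγp hiso K hKinv w₀ hw₀ hb₀K
  set w₂ := w₁.bypass with hw₂def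
  have hw₂p : w₂.IsPath := Walk.bypass_isPath w₁
  have hsub : w₂.support ⊆ w₁.support := Walk.support_bypass_subset w₁
  have hw₂W : ∀ x ∈ w₂.support, γ x ≠ x := fun x hx => hw₁ x (hsub hx)
  have hinj₂ : OrbInj γ p w₂.support := fun x hx y hy hxy =>
    hinj₁ x (hsub hx) y (hsub hy) hxy
  have haw₂ : a ∈ w₂.support := Walk.start_mem_support w₂
  have hb'w₂ : b' ∈ w₂.support := Walk.end_mem_support w₂
  -- construction of the p paths
  have key : ∀ m : ℕ, m < p → ∃ P : G.Walk s t, P.IsPath ∧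
      (∀ x ∈ P.support, x = s ∨ x = t ∨ ∃ y ∈ w₂.support, (γ ^ m) y = x) ∧
      (γ ^ m) a ∈ P.support := by
    intro m hm
    have hsm : G.Adj s ((γ ^ m) a) := by
      have h1 := (hiso m s a).mpr hsa
      rwa [pow_fix hs m] at h1
    set wm := w₂.map (permHom G (γ ^ m) (hiso m)) with hwmdef
    have hwm_supp : wm.support = w₂.support.map (γ ^ m : Equiv.Perm V) := by
      rw [hwmdef, Walk.support_map]; rfl
    have hwmW : ∀ x ∈ wm.support, γ x ≠ x := by
      intro x hx
      rw [hwm_supp] at hx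
      obtain ⟨y, hy, rfl⟩ := List.mem_map.mp hx
      exact pow_notfix (hw₂W y hy) m
    have hwm_path : wm.IsPath :=
      Walk.map_isPath_of_injective (by intro x y hxy; exact (γ ^ m).injective hxy) hw₂p
    have hs_not : s ∉ wm.support := fun hc => (hwmW s hc) hs
    have hmem_of : ∀ x ∈ wm.support, ∃ y ∈ w₂.support, (γ ^ m) y = x := by
      intro x hx
      rw [hwm_supp] at hx
      exact List.mem_map.mp hx
    have hstart : (γ ^ m) a ∈ wm.support := by
      rw [hwm_supp]
      exact List.mem_map.mpr ⟨a, haw₂, rfl⟩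
    by_cases hbt : (γ ^ m) b' = t
    · refine ⟨Walk.cons hsm (wm.copy rfl hbt), ?_, ?_, ?_⟩
      · exact Walk.IsPath.cons (by rwa [Walk.isPath_copy]) (by rwa [Walk.support_copy])
      · intro x hx
        rw [Walk.support_cons, Walk.support_copy] at hx
        rcases List.mem_cons.mp hx with rfl | hx'
        · exact Or.inl rfl
        · exact Or.inr (Or.inr (hmem_of x hx'))
      · rw [Walk.support_cons, Walk.support_copy]
        exact List.mem_cons_of_mem _ hstart
    · have hadj' : G.Adj ((γ ^ m) b') t := by
        obtain ⟨j, hj, hjb⟩ := hb'K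
        have he : (γ ^ m) b' = (γ ^ ((m + j) % p)) b₀ := by
          rw [← hjb, pow_apply_comm, ← pow_eq_mod γ hγp]
        rw [he] at hbt ⊢
        exact hKt _ hbt
      have ht_not : t ∉ wm.support := by
        intro hc
        obtain ⟨y, hy, hyt⟩ := hmem_of t hc
        rcases htK with hft | ⟨j, hjt⟩
        · exact hwmW t hc hft
        · have h1 : Orb γ p y t := ⟨m % p, Nat.mod_lt _ hp0, by rw [← pow_eq_mod γ hγp]; exact hyt⟩
          have h0 : Orb γ p b₀ t := ⟨j % p, Nat.mod_lt _ hp0, by rw [← pow_eq_mod γ hγp]; exact hjt⟩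
          have h2 : Orb γ p b' y :=
            orb_trans hγp hp0 (orb_symm hγp hp0 hb'K)
              (orb_trans hγp hp0 h0 (orb_symm hγp hp0 h1))
          have h3 : b' = y := hinj₂ b' hb'w₂ y hy h2
          rw [← h3] at hyt
          exact hbt hyt
      refine ⟨Walk.cons hsm (wm.append (Walk.cons hadj' Walk.nil)), ?_, ?_, ?_⟩
      · have hsupp : (Walk.cons hsm (wm.append (Walk.cons hadj' Walk.nil))).support
            = s :: (wm.support ++ [t]) := by
          rw [Walk.support_cons, Walk.support_append, Walk.support_cons, Walk.support_nil]
          rfl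
        rw [Walk.isPath_def, hsupp]
        refine List.nodup_cons.mpr ⟨?_, ?_⟩
        · intro hc
          rcases List.mem_append.mp hc with h1 | h1
          · exact hs_not h1
          · exact hst (List.mem_singleton.mp h1)
        · refine List.Nodup.append (Walk.isPath_def _ |>.mp hwm_path) (List.nodup_singleton t) ?_
          intro x hx hx'
          rw [List.mem_singleton] at hx'
          rw [hx'] at hx
          exact ht_not hx
      · intro x hx
        rw [Walk.support_cons, Walk.support_append, Walk.support_cons, Walk.support_nil] at hx
        rcases List.mem_cons.mp hx with rfl | hx'
        · exact Or.inl rfl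
        · rcases List.mem_append.mp hx' with h1 | h1
          · exact Or.inr (Or.inr (hmem_of x h1))
          · have : x = t := by simpa using h1
            exact Or.inr (Or.inl this)
      · rw [Walk.support_cons, Walk.support_append]
        exact List.mem_cons_of_mem _ (List.mem_append.mpr (Or.inl hstart))
  -- assemble the family of paths
  have hPP : ∀ m : Fin p, ∃ P : G.Walk s t, P.IsPath ∧
      (∀ x ∈ P.support, x = s ∨ x = t ∨ ∃ y ∈ w₂.support, (γ ^ (m : ℕ)) y = x) ∧
      (γ ^ (m : ℕ)) a ∈ P.support := fun m => key m.1 m.2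
  let f : Fin p → G.Path s t := fun m => ⟨(hPP m).choose, (hPP m).choose_spec.1⟩
  have hf_supp : ∀ m : Fin p, ∀ x ∈ (f m).val.support,
      x = s ∨ x = t ∨ ∃ y ∈ w₂.support, (γ ^ (m : ℕ)) y = x := fun m => (hPP m).choose_spec.2.1
  have hf_mem : ∀ m : Fin p, (γ ^ (m : ℕ)) a ∈ (f m).val.support := fun m =>
    (hPP m).choose_spec.2.2
  have hdisj : ∀ i j : Fin p, i ≠ j → InternallyDisjoint (f i).val (f j).val := by
    intro i j hij x hxi hxj
    by_contra hcon
    push_neg at hcon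
    obtain ⟨hxs, hxt⟩ := hcon
    rcases hf_supp i x hxi with rfl | rfl | ⟨y, hy, hyx⟩
    · exact hxs rfl
    · exact hxt rfl
    rcases hf_supp j x hxj with rfl | rfl | ⟨y', hy', hy'x⟩
    · exact hxs rfl
    · exact hxt rfl
    have horb : Orb γ p y y' := by
      refine ⟨(p - (j : ℕ) % p + (i : ℕ)) % p, Nat.mod_lt _ hp0, ?_⟩
      rw [← pow_eq_mod γ hγp, ← pow_apply_comm γ (p - (j : ℕ) % p) (i : ℕ) y, hyx, ← hy'x,
        pow_cancel hγp hp0 (j : ℕ) y']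
    have hyy : y = y' := hinj₂ y hy y' hy' horb
    rw [← hyy] at hy'x
    have : (i : ℕ) = (j : ℕ) :=
      pow_apply_injOn hp hγp (hw₂W y hy) (i : ℕ) i.2 (j : ℕ) j.2 (hyx.trans hy'x.symm)
    exact hij (Fin.ext this)
  have hfinj : Function.Injective f := by
    intro i j hfij
    by_contra hij
    have hmem : (γ ^ (i : ℕ)) a ∈ (f j).val.support := by
      rw [← hfij]; exact hf_mem i
    rcases hdisj i j hij ((γ ^ (i : ℕ)) a) (hf_mem i) hmem with h1 | h1
    · have := hw₂W a haw₂
      rw [← h1] at hs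
      exact pow_notfix (hw₂W a haw₂) (i : ℕ) hs
    · rcases hat with hft | haK
      · rw [← h1] at hft
        exact pow_notfix (hw₂W a haw₂) (i : ℕ) hft
      · rcases htK with hft | ⟨j', hjt⟩
        · rw [← h1] at hft
          exact pow_notfix (hw₂W a haw₂) (i : ℕ) hft
        · apply haK ((p - (i : ℕ) % p + j') % p)
          rw [← pow_eq_mod γ hγp, ← pow_apply_comm γ (p - (i : ℕ) % p) j' b₀, hjt, ← h1,
            pow_cancel hγp hp0 (i : ℕ) a]
  have := himp s t hst hnadj p f hfinj hdisj
  omega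

lemma lemL1 {k p : ℕ} (hp : p.Prime) (hpk : k < p) (himp : IsKImproved G k)
    (hsep : NoSeparatingClique G)
    (γ : Equiv.Perm V) (hγ1 : γ ≠ 1) (hγp : γ ^ p = 1)
    (hiso : ∀ i : ℕ, IsGraphAutomorphism G (γ ^ i))
    (u v : V) (hu : γ u = u) (hv : γ v = v) (huv : u ≠ v) : G.Adj u v := by
  classical
  by_contra hnadj
  -- some vertex is moved
  obtain ⟨c, hc⟩ : ∃ c, γ c ≠ c := by
    by_contra hall
    push_neg at hall
    exact hγ1 (Equiv.ext hall)
  by_cases hTI : ∃ s t a₁ b₁ : V, ∃ w : G.Walk a₁ b₁,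
      γ s = s ∧ γ t = t ∧ s ≠ t ∧ ¬ G.Adj s t ∧ G.Adj s a₁ ∧ G.Adj b₁ t ∧
      (∀ z ∈ w.support, γ z ≠ z)
  · obtain ⟨s, t, a₁, b₁, w, hfs, hft, hst, hsnadj, hsa, hbt, hwW⟩ := hTI
    refine lemC hp hpk himp γ hγp hiso s t hst hsnadj hfs b₁ ?_ (Or.inl hft) a₁ hsa
      (Or.inl hft) w hwW
    intro i _
    have h1 := (hiso i b₁ t).mpr hbt
    rwa [pow_fix hft i] at h1
  · -- every `W`-component's fixed neighbourhood is a clique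
    have hcl : ∀ s t a₁ b₁ : V, ∀ w : G.Walk a₁ b₁, γ s = s → γ t = t →
        G.Adj s a₁ → G.Adj b₁ t → (∀ z ∈ w.support, γ z ≠ z) → s = t ∨ G.Adj s t := by
      intro s t a₁ b₁ w hfs hft hsa hbt hwW
      by_contra hcon
      push_neg at hcon
      exact hTI ⟨s, t, a₁, b₁, w, hfs, hft, hcon.1, hcon.2, hsa, hbt, hwW⟩
    set Kc : Set V := {x | γ x = x ∧ ∃ z : V, G.Adj z x ∧
      ∃ w : G.Walk c z, ∀ y ∈ w.support, γ y ≠ y} with hKcdef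
    have hKc_clique : G.IsClique Kc := by
      rintro x ⟨hfx, z₁, hz₁x, w₁, hw₁⟩ y ⟨hfy, z₂, hz₂y, w₂, hw₂⟩ hxy
      have hw : ∀ q ∈ (w₁.reverse.append w₂).support, γ q ≠ q := by
        intro q hq
        rw [Walk.mem_support_append_iff] at hq
        rcases hq with hq | hq
        · exact hw₁ q (by rwa [Walk.support_reverse, List.mem_reverse] at hq)
        · exact hw₂ q hq
      rcases hcl x y z₁ z₂ (w₁.reverse.append w₂) hfx hfy hz₁x.symm hz₂y hw with h | h
      · exact absurd h hxy
      · exact h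
    have hpre := hsep Kc hKc_clique
    -- pick an endpoint outside Kc
    have hKw : ∃ w₀, (w₀ = u ∨ w₀ = v) ∧ w₀ ∉ Kc := by
      by_cases h1 : u ∈ Kc
      · refine ⟨v, Or.inr rfl, fun h2 => ?_⟩
        exact hnadj (hKc_clique h1 h2 huv)
      · exact ⟨u, Or.inl rfl, h1⟩
    obtain ⟨w₀, hw₀uv, hw₀K⟩ := hKw
    have hw₀fix : γ w₀ = w₀ := by rcases hw₀uv with rfl | rfl <;> assumption
    have hcK : c ∉ Kc := fun h => hc h.1
    obtain ⟨wi⟩ := hpre ⟨c, hcK⟩ ⟨w₀, hw₀K⟩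
    set wG := wi.map (SimpleGraph.Embedding.induce (Kcᶜ : Set V)).toHom with hwGdef
    have hwG_supp : ∀ x ∈ wG.support, x ∉ Kc := by
      intro x hx
      rw [hwGdef, Walk.support_map] at hx
      obtain ⟨⟨y, hy⟩, _, rfl⟩ := List.mem_map.mp hx
      exact hy
    set A : Set V := {x | ∃ w : G.Walk c x, ∀ y ∈ w.support, γ y ≠ y} with hAdef
    have hcA : c ∈ A := ⟨Walk.nil, by
      intro y hy
      rw [Walk.support_nil, List.mem_singleton] at hy
      rwa [hy]⟩
    have hw₀A : w₀ ∉ A := by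
      rintro ⟨w, hw⟩
      exact hw w₀ (Walk.end_mem_support w) hw₀fix
    obtain ⟨d, hd_darts, hdA, hdnA⟩ := wG.exists_boundary_dart A hcA hw₀A
    have hd_snd_supp : d.snd ∈ wG.support := Walk.dart_snd_mem_support_of_mem_darts _ hd_darts
    by_cases hfix2 : γ d.snd = d.snd
    · obtain ⟨wA, hwA⟩ := hdA
      exact hwG_supp d.snd hd_snd_supp ⟨hfix2, d.fst, d.adj, wA, hwA⟩
    · apply hdnA
      obtain ⟨wA, hwA⟩ := hdA
      refine ⟨wA.concat d.adj, ?_⟩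
      intro y hy
      rw [Walk.support_concat, List.mem_append] at hy
      rcases hy with hy | hy
      · exact hwA y hy
      · rw [List.mem_singleton] at hy
        rwa [hy]

end Stmt5Helpers

theorem stmt5 {V : Type*} [Fintype V] (G : SimpleGraph V) (k p : ℕ)
    (hk : 1 ≤ k) (hp : p.Prime) (hpk : k < p)
    (hconn : G.Connected) (himp : IsKImproved G k) (hsep : NoSeparatingClique G)
    (Γ : Subgroup (Equiv.Perm V))
    (haut : ∀ γ ∈ Γ, IsGraphAutomorphism G γ)
    (hab : ∀ γ ∈ Γ, ∀ γ' ∈ Γ, γ * γ' = γ' * γ)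
    (hord : ∀ γ ∈ Γ, γ ≠ 1 → orderOf γ = p) :
    G.IsClique (⋃ γ ∈ {g : Equiv.Perm V | g ∈ Γ ∧ g ≠ 1}, {v : V | γ v = v}) := by
  classical
  have hp0 : 0 < p := hp.pos
  have hiso : ∀ ε ∈ Γ, ∀ i : ℕ, IsGraphAutomorphism G (ε ^ i) :=
    fun ε hε i => haut _ (pow_mem hε i)
  have hpow : ∀ ε ∈ Γ, ε ≠ 1 → ε ^ p = 1 := fun ε hε h1 => by
    rw [← hord ε hε h1]; exact pow_orderOf_eq_one ε
  have L1' : ∀ ε ∈ Γ, ε ≠ 1 → ∀ a b : V, ε a = a → ε b = b → a ≠ b → G.Adj a b :=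
    fun ε hε h1 a b ha hb hab' =>
      Stmt5Helpers.lemL1 hp hpk himp hsep ε h1 (hpow ε hε h1) (hiso ε hε) a b ha hb hab'
  rintro x hx y hy hxy
  simp only [Set.mem_iUnion, Set.mem_setOf_eq] at hx hy
  obtain ⟨γ', ⟨hγΓ, hγ1⟩, hγx⟩ := hx
  obtain ⟨δ', ⟨hδΓ, hδ1⟩, hδy⟩ := hy
  by_cases hcase : γ' y = y
  · exact L1' γ' hγΓ hγ1 x y hγx hcase hxy
  · by_contra hnadj
    have hγp : γ' ^ p = 1 := hpow γ' hγΓ hγ1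
    have hisoγ := hiso γ' hγΓ
    set Sx : Set V := {z | γ' z = z ∧ z ≠ x} with hSxdef
    have hSx_clique : G.IsClique Sx := by
      rintro a ⟨ha, _⟩ b ⟨hb, _⟩ hab'
      exact L1' γ' hγΓ hγ1 a b ha hb hab'
    have hpre := hsep Sx hSx_clique
    have hxc : x ∈ (Sxᶜ : Set V) := fun h => h.2 rfl
    have hyc : y ∈ (Sxᶜ : Set V) := fun h => hcase h.1
    obtain ⟨wi⟩ := hpre ⟨x, hxc⟩ ⟨y, hyc⟩
    set wG := (wi.map (SimpleGraph.Embedding.induce (Sxᶜ : Set V)).toHom).bypass with hwGdef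
    have hwG_path : wG.IsPath := Walk.bypass_isPath _
    have hwG_supp : ∀ z ∈ wG.support, z ∉ Sx := by
      intro z hz
      have hz' := Walk.support_bypass_subset _ hz
      rw [Walk.support_map] at hz'
      obtain ⟨⟨z₀, hz₀⟩, _, rfl⟩ := List.mem_map.mp hz'
      exact hz₀
    obtain ⟨a₁, hadj₁, q, hq⟩ := Walk.exists_eq_cons_of_ne hxy wG
    rw [hq] at hwG_path hwG_supp
    replace hwG_path := (Walk.cons_isPath_iff hadj₁ q).mp hwG_path
    have hx_not_q : x ∉ q.support := hwG_path.2
    have hqW : ∀ z ∈ q.support, γ' z ≠ z := by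
      intro z hz hzfix
      have h1 : z ∉ Sx := hwG_supp z (List.mem_cons_of_mem _ hz)
      have h2 : z = x := by
        by_contra h3
        exact h1 ⟨hzfix, h3⟩
      rw [h2] at hz
      exact hx_not_q hz
    have ha₁W : γ' a₁ ≠ a₁ := hqW a₁ (Walk.start_mem_support q)
    have hc0 : Commute δ' γ' := hab δ' hδΓ γ' hγΓ
    refine Stmt5Helpers.lemC hp hpk himp γ' hγp hisoγ x y hxy hnadj hγx y ?_
      (Or.inr ⟨0, by simp⟩) a₁ hadj₁ (Or.inr ?_) q hqW
    · intro i hne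
      have hfixz : δ' ((γ' ^ i) y) = (γ' ^ i) y := by
        calc δ' ((γ' ^ i) y) = (δ' * γ' ^ i) y := rfl
          _ = (γ' ^ i * δ') y := by rw [(hc0.pow_right i).eq]
          _ = (γ' ^ i) y := by rw [Equiv.Perm.mul_apply, hδy]
      exact L1' δ' hδΓ hδ1 _ y hfixz hδy hne
    · intro i he
      apply hnadj
      have h2 := (hisoγ (p - i % p) x a₁).mpr hadj₁
      rw [Stmt5Helpers.pow_fix hγx] at h2
      rw [← he, Stmt5Helpers.pow_cancel hγp hp0 i y] at h2
      exact h2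
end

section
/- Every k-degenerate finite simple graph G on n ≥ k vertices has at most 2^k · (n − k + 1) nonempty cliques, i.e., the number of nonempty sets of pairwise adjacent vertices of G is at most 2^k · (n − k + 1). -/
/-!
Induction on a vertex set `S`: degeneracy gives `v ∈ S` with at most `k` neighbours in `S`.
A clique in `S` through `v` is `v` plus a subset of those neighbours, so there are at most `2 ^ k`
of them, and the cliques in `S` avoiding `v` are the cliques in `S \ {v}`. Each of the `|S| - k`
deleted vertices thus contributes at most `2 ^ k` cliques, and the last `k` vertices at most `2 ^ k`.
-/

open SimpleGraph

/-- A graph is *k-degenerate* if every nonempty set `S` of vertices contains a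
vertex with at most `k` neighbors inside `S`. -/
def IsKDegenerate {V : Type*} (G : SimpleGraph V) (k : ℕ) : Prop :=
  ∀ S : Set V, S.Nonempty → ∃ v ∈ S, {u ∈ S | G.Adj v u}.ncard ≤ k

open Finset

namespace SimpleGraph

variable {V : Type*} [DecidableEq V] (G : SimpleGraph V) [DecidableRel G.Adj]

def nonemptyCliquesIn (S : Finset V) : Finset (Finset V) :=
  {s ∈ S.powerset | s.Nonempty ∧ G.IsClique (s : Set V)}

variable {G}

theorem mem_nonemptyCliquesIn {S s : Finset V} :
    s ∈ G.nonemptyCliquesIn S ↔ s ⊆ S ∧ s.Nonempty ∧ G.IsClique (s : Set V) := by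
  simp [nonemptyCliquesIn]

theorem card_nonemptyCliquesIn_le_two_pow (S : Finset V) :
    #(G.nonemptyCliquesIn S) ≤ 2 ^ #S :=
  (card_le_card (filter_subset _ _)).trans (card_powerset S).le

theorem card_filter_mem_nonemptyCliquesIn_le (S : Finset V) (v : V) :
    #{s ∈ G.nonemptyCliquesIn S | v ∈ s} ≤ 2 ^ #{u ∈ S | G.Adj v u} := by
  rw [← card_powerset]
  refine card_le_card_of_injOn (fun s => s.erase v) ?_ ?_
  · intro s hs
    obtain ⟨hs, hvs⟩ := mem_filter.1 hs
    obtain ⟨hsS, -, hclique⟩ := mem_nonemptyCliquesIn.1 hs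
    rw [mem_coe, mem_powerset]
    intro u hu
    obtain ⟨huv, hus⟩ := mem_erase.1 hu
    exact mem_filter.2 ⟨hsS hus, hclique hvs hus (Ne.symm huv)⟩
  · intro s hs t ht hst
    rw [← insert_erase (mem_filter.1 hs).2, ← insert_erase (mem_filter.1 ht).2]
    exact congrArg (insert v) hst

theorem filter_not_mem_nonemptyCliquesIn (S : Finset V) (v : V) :
    {s ∈ G.nonemptyCliquesIn S | v ∉ s} = G.nonemptyCliquesIn (S.erase v) := by
  ext s
  simp only [mem_filter, mem_nonemptyCliquesIn, subset_erase]
  tauto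

theorem card_nonemptyCliquesIn_le_erase_add (S : Finset V) (v : V) :
    #(G.nonemptyCliquesIn S) ≤ #(G.nonemptyCliquesIn (S.erase v)) + 2 ^ #{u ∈ S | G.Adj v u} := by
  rw [← card_filter_add_card_filter_not (v ∈ ·), filter_not_mem_nonemptyCliquesIn,
    add_comm]
  exact Nat.add_le_add_left (card_filter_mem_nonemptyCliquesIn_le S v) _

end SimpleGraph

namespace IsKDegenerate

variable {V : Type*} {G : SimpleGraph V} {k : ℕ}

theorem exists_card_adj_le [DecidableRel G.Adj] (h : IsKDegenerate G k) {S : Finset V}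
    (hS : S.Nonempty) : ∃ v ∈ S, #{u ∈ S | G.Adj v u} ≤ k := by
  obtain ⟨v, hv, hdeg⟩ := h S hS
  refine ⟨v, hv, ?_⟩
  rwa [← Set.ncard_coe_finset, coe_filter]

theorem card_nonemptyCliquesIn_le [DecidableEq V] [DecidableRel G.Adj] (h : IsKDegenerate G k)
    (S : Finset V) (hk : k ≤ #S) : #(G.nonemptyCliquesIn S) ≤ 2 ^ k * (#S - k + 1) := by
  induction S using Finset.strongInduction with
  | H S ih =>
    obtain hSk | hkS := hk.eq_or_lt
    · simpa [← hSk] using card_nonemptyCliquesIn_le_two_pow S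
    obtain ⟨v, hv, hvk⟩ := h.exists_card_adj_le (card_pos.1 (by omega : 0 < #S))
    have hcard : #(S.erase v) = #S - 1 := card_erase_of_mem hv
    have herase := ih (S.erase v) (erase_ssubset hv) (by omega)
    calc #(G.nonemptyCliquesIn S)
        ≤ #(G.nonemptyCliquesIn (S.erase v)) + 2 ^ #{u ∈ S | G.Adj v u} :=
          card_nonemptyCliquesIn_le_erase_add S v
      _ ≤ 2 ^ k * (#S - 1 - k + 1) + 2 ^ k :=
          Nat.add_le_add (hcard ▸ herase) (Nat.pow_le_pow_right two_pos hvk)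
      _ = 2 ^ k * (#S - k + 1) := by
          rw [show #S - k = (#S - 1 - k + 1) by omega]
          ring

end IsKDegenerate

theorem stmt8 {V : Type*} [Fintype V] (G : SimpleGraph V) (k : ℕ)
    (hk : k ≤ Fintype.card V) (hdeg : IsKDegenerate G k) :
    Nat.card {s : Finset V // s.Nonempty ∧ G.IsClique (s : Set V)} ≤
      2 ^ k * (Fintype.card V - k + 1) := by
  classical
  calc Nat.card {s : Finset V // s.Nonempty ∧ G.IsClique (s : Set V)}
      = #(G.nonemptyCliquesIn univ) := by
        rw [Nat.card_eq_fintype_card, Fintype.card_subtype, nonemptyCliquesIn, powerset_univ]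
    _ ≤ 2 ^ k * (Fintype.card V - k + 1) := hdeg.card_nonemptyCliquesIn_le univ hk
end

section
/- Let p be a prime and n a natural number. If there exists an injective group homomorphism from ℤ/pℤ × ℤ/pℤ into the symmetric group on n letters, then n ≥ 2p. -/
open Nat

/-- For `n < p ^ 2` Legendre's formula reduces to `n / p`, so `p ^ k ∣ n !` forces `k ≤ n / p`. -/
theorem Nat.Prime.mul_le_of_pow_dvd_factorial {p k n : ℕ} (hp : p.Prime) (hk : k ≤ p)
    (h : p ^ k ∣ n !) : k * p ≤ n := by
  by_contra! hlt
  have hn : n ≠ 0 := by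
    rintro rfl
    have hk0 : k = 0 := by
      by_contra hk0
      exact hp.one_lt.ne' (Nat.pow_eq_one.mp (Nat.eq_one_of_dvd_one h) |>.resolve_right hk0)
    simp [hk0] at hlt
  have hlog : Nat.log p n < 2 :=
    Nat.log_lt_of_lt_pow hn (hlt.trans_le (by rw [sq]; exact Nat.mul_le_mul_right p hk))
  have hdiv : k ≤ n / p := by
    simpa [Finset.sum_Ico_eq_sum_range] using (hp.pow_dvd_factorial_iff hlog).mp h
  exact absurd ((Nat.le_div_iff_mul_le hp.pos).mp hdiv) (not_le.mpr hlt)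

theorem stmt10 (p n : ℕ) (hp : p.Prime)
    (f : Multiplicative (ZMod p × ZMod p) →* Equiv.Perm (Fin n))
    (hf : Function.Injective f) :
    2 * p ≤ n := by
  have : NeZero p := ⟨hp.ne_zero⟩
  have hdvd : p ^ 2 ∣ n ! := by
    simpa [Nat.card_eq_fintype_card, Fintype.card_prod, Fintype.card_perm, sq]
      using Subgroup.card_dvd_of_injective f hf
  exact hp.mul_le_of_pow_dvd_factorial hp.two_le hdvd
end

section
/- For every natural number n ≥ 2, every subgroup of the symmetric group on n letters admits a generating set of cardinality at most n · ⌈log₂ n⌉. -/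
open Subgroup in
private lemma aux_gen {G : Type*} [Group G] [Finite G] :
    ∀ (k : ℕ) (H : Subgroup G), Nat.card H ≤ 2 ^ k →
      ∃ S : Finset G, Subgroup.closure (S : Set G) = H ∧ S.card ≤ k := by
  classical
  intro k
  induction k with
  | zero =>
    intro H hH
    refine ⟨∅, ?_, by simp⟩
    simp only [pow_zero] at hH
    rw [H.eq_bot_of_card_le hH]
    simp
  | succ k ih =>
    intro H hH
    by_cases hbot : H = ⊥
    · exact ⟨∅, by simp [hbot], by simp⟩
    · -- pick a maximal proper subgroup of H
      have hfin : ({K : Subgroup G | K < H}).Finite := Set.toFinite _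
      have hne : ({K : Subgroup G | K < H}).Nonempty :=
        ⟨⊥, lt_of_le_of_ne bot_le (Ne.symm hbot)⟩
      obtain ⟨K, hK, hKmax⟩ : ∃ K ∈ {K : Subgroup G | K < H},
          ∀ K' ∈ {K : Subgroup G | K < H}, id K ≤ id K' → id K = id K' := by
        obtain ⟨K, hK, hmax⟩ := hfin.exists_maximalFor id _ hne
        exact ⟨K, hK, fun K' hK' h => le_antisymm h (hmax hK' h)⟩
      simp only [Set.mem_setOf_eq] at hK
      obtain ⟨hKle, x, hxH, hxK⟩ := SetLike.lt_iff_le_and_exists.mp hK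
      -- card K ≤ 2 ^ k
      have hdvd : Nat.card K ∣ Nat.card H := Subgroup.card_dvd_of_le hKle
      obtain ⟨m, hm⟩ := hdvd
      have hKpos : 0 < Nat.card K := Nat.card_pos
      have hHpos : 0 < Nat.card H := Nat.card_pos
      have hm2 : 2 ≤ m := by
        have h0 : m ≠ 0 := by rintro rfl; rw [Nat.mul_zero] at hm; omega
        have h1 : m ≠ 1 := by
          rintro rfl
          rw [Nat.mul_one] at hm
          exact hK.ne (Subgroup.eq_of_le_of_card_ge hKle hm.le)
        omega
      have hKcard : Nat.card K ≤ 2 ^ k := by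
        have h2 : 2 * Nat.card K ≤ Nat.card H := by
          rw [hm, Nat.mul_comm 2]
          exact Nat.mul_le_mul_left _ hm2
        rw [pow_succ] at hH
        omega
      obtain ⟨S, hScl, hScard⟩ := ih K hKcard
      refine ⟨insert x S, ?_, (Finset.card_insert_le _ _).trans (by omega)⟩
      apply le_antisymm
      · rw [Subgroup.closure_le]
        intro y hy
        rcases Finset.mem_insert.mp (by exact_mod_cast hy) with h | h
        · exact h ▸ hxH
        · exact hKle (hScl ▸ Subgroup.subset_closure (by exact_mod_cast h))
      · -- H ≤ closure (insert x S)
        set L := Subgroup.closure ((insert x S : Finset G) : Set G) with hL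
        have hKL : K ≤ L := by
          rw [← hScl]
          apply Subgroup.closure_mono
          intro y hy
          simp only [Finset.coe_insert, Set.mem_insert_iff]
          exact Or.inr hy
        have hxL : x ∈ L := Subgroup.subset_closure (by simp)
        -- L ⊓ H is a subgroup between K and H, strictly bigger than K
        have hKLH : K ≤ L ⊓ H := le_inf hKL hKle
        have hne' : K ≠ L ⊓ H := by
          intro h
          exact hxK (h ▸ (Subgroup.mem_inf.mpr ⟨hxL, hxH⟩))
        have hLHlt : L ⊓ H ≤ H := inf_le_right
        rcases lt_or_eq_of_le hLHlt with hlt | heq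
        · exact absurd (hKmax (L ⊓ H) hlt hKLH) hne'
        · rw [← heq]; exact inf_le_left

theorem stmt12 (n : ℕ) (hn : 2 ≤ n) (H : Subgroup (Equiv.Perm (Fin n))) :
    ∃ S : Finset (Equiv.Perm (Fin n)),
      Subgroup.closure (S : Set (Equiv.Perm (Fin n))) = H ∧
      S.card ≤ n * Nat.clog 2 n := by
  apply aux_gen
  calc Nat.card H ≤ Nat.card (Equiv.Perm (Fin n)) :=
        Nat.le_of_dvd Nat.card_pos H.card_subgroup_dvd_card
    _ = Nat.factorial n := by simp [Nat.card_eq_fintype_card, Fintype.card_perm]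
    _ ≤ n ^ n := Nat.factorial_le_pow n
    _ ≤ (2 ^ Nat.clog 2 n) ^ n := Nat.pow_le_pow_left (Nat.le_pow_clog one_lt_two n) n
    _ = 2 ^ (n * Nat.clog 2 n) := by rw [← pow_mul, Nat.mul_comm]
end
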